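/- arXiv:1702.00605 — 9 statements merged into one kernel-verified Lean document; each statement's English description precedes it below -/
import Mathlib

section
/- Let T be a positive sesquilinear form on a subspace D of a Hilbert space, and let ‖·‖ and ‖·‖' be two norms on D, both compatible with T, such that D is complete with respect to each of them. Then the norms ‖·‖ and ‖·‖' are equivalent. -/
noncomputable section

open Filter Topology Function
open scoped InnerProductSpace

namespace Paper

variable {V : Type} [AddCommGroup V] [Module ℂ V]

/-- `n` is a norm on the complex vector space `V`. -/
def IsNormFn (n : V → ℝ) : Prop :=
  (∀ x : V, n x = 0 ↔ x = 0) ∧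
    (∀ (c : ℂ) (x : V), n (c • x) = ‖c‖ * n x) ∧
      ∀ x y : V, n (x + y) ≤ n x + n y

/-- `ξ` is a Cauchy sequence with respect to the norm `n`. -/
def IsCauchyWrt (n : V → ℝ) (ξ : ℕ → V) : Prop :=
  ∀ ε : ℝ, 0 < ε → ∃ N : ℕ, ∀ p q : ℕ, N ≤ p → N ≤ q → n (ξ p - ξ q) < ε

/-- `ξ` tends to `x` with respect to the norm `n`. -/
def TendstoWrt (n : V → ℝ) (ξ : ℕ → V) (x : V) : Prop :=
  Tendsto (fun k => n (ξ k - x)) atTop (𝓝 0)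

/-- `V` is complete with respect to the norm `n`. -/
def CompleteWrt (n : V → ℝ) : Prop :=
  ∀ ξ : ℕ → V, IsCauchyWrt n ξ → ∃ x : V, TendstoWrt n ξ x

/-- The two norms `n₁` and `n₂` are equivalent. -/
def EquivNorms (n₁ n₂ : V → ℝ) : Prop :=
  ∃ c₁ : ℝ, 0 < c₁ ∧ ∃ c₂ : ℝ, 0 < c₂ ∧ ∀ x : V, n₁ x ≤ c₁ * n₂ x ∧ n₂ x ≤ c₂ * n₁ x

/-- `Ω` is a sesquilinear form: linear in the first entry, conjugate-linear in the second. -/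
def IsSesq (Ω : V → V → ℂ) : Prop :=
  (∀ η : V, IsLinearMap ℂ fun ξ => Ω ξ η) ∧
    ∀ ξ : V, IsLinearMap ℂ fun η => (starRingEnd ℂ) (Ω ξ η)

/-- `T` is a positive form: `T(ξ,ξ) ≥ 0` for every `ξ`. -/
def IsPositiveForm (T : V → V → ℂ) : Prop :=
  ∀ x : V, (T x x).im = 0 ∧ 0 ≤ (T x x).re

/-- The norm `n` is compatible with the positive sesquilinear form `T`. -/
def CompatibleWithForm (T : V → V → ℂ) (n : V → ℝ) : Prop :=
  (∃ α : ℝ, 0 < α ∧ ∀ ξ : V, (T ξ ξ).re ≤ α * n ξ ^ 2) ∧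
    ∀ ξ : ℕ → V, Tendsto (fun k => (T (ξ k) (ξ k)).re) atTop (𝓝 0) →
      IsCauchyWrt n ξ → Tendsto (fun k => n (ξ k)) atTop (𝓝 0)

/-- A realization of `(V, n)` as a dense subspace of a reflexive Banach space `E`. -/
structure BanachModel (V : Type) [AddCommGroup V] [Module ℂ V] (n : V → ℝ) : Type 1 where
  E : Type
  [instGroup : NormedAddCommGroup E]
  [instSpace : NormedSpace ℂ E]
  [instComplete : CompleteSpace E]
  j : V →ₗ[ℂ] E
  isometry : ∀ x : V, ‖j x‖ = n x
  dense : DenseRange j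
  reflexive : Surjective (NormedSpace.inclusionInDoubleDual ℂ E)

/-- `V` endowed with the norm `n` is a reflexive Banach space. -/
def IsReflexiveBanachWrt (n : V → ℝ) : Prop :=
  ∃ M : BanachModel V n, Surjective M.j

/-- The completion of `V` with respect to the norm `n` is a reflexive Banach space. -/
def CompletionIsReflexiveBanach (n : V → ℝ) : Prop :=
  Nonempty (BanachModel V n)

variable {H : Type} [NormedAddCommGroup H] [InnerProductSpace ℂ H]

/-- The embedding of `D[n]` into `H` is continuous. -/
def EmbedsContinuously (D : Submodule ℂ H) (n : D → ℝ) : Prop :=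
  ∃ α : ℝ, 0 < α ∧ ∀ ξ : D, ‖(ξ : H)‖ ≤ α * n ξ

/-- The norm `n` on `D` is compatible with the inner product of `H`. -/
def CompatibleWithInner (D : Submodule ℂ H) (n : D → ℝ) : Prop :=
  EmbedsContinuously D n ∧
    ∀ ξ : ℕ → D, Tendsto (fun k => ‖(ξ k : H)‖) atTop (𝓝 0) →
      IsCauchyWrt n ξ → Tendsto (fun k => n (ξ k)) atTop (𝓝 0)

/-- The form `Ω` is bounded on `D[n]`. -/
def BoundedOn (D : Submodule ℂ H) (Ω : D → D → ℂ) (n : D → ℝ) : Prop :=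
  ∃ β : ℝ, 0 < β ∧ ∀ ξ η : D, ‖Ω ξ η‖ ≤ β * n ξ * n η

/-- `Ω` is q-closed with respect to the norm `n` (Definition 5.2 of Di Bella–Trapani). -/
def IsQClosed (D : Submodule ℂ H) (Ω : D → D → ℂ) (n : D → ℝ) : Prop :=
  IsNormFn n ∧ CompatibleWithInner D n ∧ IsReflexiveBanachWrt n ∧ BoundedOn D Ω n

/-- `Ω` is q-closable with respect to the norm `n`. -/
def IsQClosable (D : Submodule ℂ H) (Ω : D → D → ℂ) (n : D → ℝ) : Prop :=
  IsNormFn n ∧ CompatibleWithInner D n ∧ CompletionIsReflexiveBanach n ∧ BoundedOn D Ω n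

/-- `Λ` is a bounded conjugate-linear functional on `D[n]`,
i.e. an element of the conjugate dual of `D[n]`. -/
def MemConjDual (D : Submodule ℂ H) (n : D → ℝ) (Λ : D → ℂ) : Prop :=
  (∀ x y : D, Λ (x + y) = Λ x + Λ y) ∧
    (∀ (c : ℂ) (x : D), Λ (c • x) = (starRingEnd ℂ) c * Λ x) ∧
      ∃ C : ℝ, ∀ x : D, ‖Λ x‖ ≤ C * n x

/-- `Υ` is a bounded sesquilinear form on `H`. -/
def IsBoundedForm (Υ : H → H → ℂ) : Prop :=
  IsSesq Υ ∧ ∃ C : ℝ, ∀ x y : H, ‖Υ x y‖ ≤ C * ‖x‖ * ‖y‖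

/-- `Υ ∈ P₀(Ω)`: `N(Ω+Υ) = {0}` and every element of the conjugate dual of `D[n]`
is represented by `Ω+Υ`. -/
def InP0 (D : Submodule ℂ H) (Ω : D → D → ℂ) (n : D → ℝ) (Υ : H → H → ℂ) : Prop :=
  (∀ ξ : D, (∀ η : D, Ω ξ η + Υ ↑ξ ↑η = 0) → ξ = 0) ∧
    ∀ Λ : D → ℂ, MemConjDual D n Λ → ∃ ξ : D, ∀ η : D, Λ η = Ω ξ η + Υ ↑ξ ↑η

/-- `Ω` is solvable with respect to the norm `n`. -/
def IsSolvable (D : Submodule ℂ H) (Ω : D → D → ℂ) (n : D → ℝ) : Prop :=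
  IsQClosed D Ω n ∧ ∃ Υ : H → H → ℂ, IsBoundedForm Υ ∧ InP0 D Ω n Υ

/-- The numerical range of a form on `D`. -/
def NumRangeForm (D : Submodule ℂ H) (Ω : D → D → ℂ) : Set ℂ :=
  {z : ℂ | ∃ ξ : D, ‖(ξ : H)‖ = 1 ∧ z = Ω ξ ξ}

/-- The numerical range of a form on `H`. -/
def NumRangeFormH (Υ : H → H → ℂ) : Set ℂ :=
  {z : ℂ | ∃ x : H, ‖x‖ = 1 ∧ z = Υ x x}

/-- `sup { |Θ(ξ,η)| : ‖η‖_Ω = 1 }`. -/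
def FormSup (D : Submodule ℂ H) (Θ : D → D → ℂ) (n : D → ℝ) (ξ : D) : ℝ :=
  sSup {r : ℝ | ∃ η : D, n η = 1 ∧ r = ‖Θ ξ η‖}

end Paper

/-!
Both norms make `D` a Banach space. If `ξ → x` for `‖·‖` and `ξ → x'` for `‖·‖'`, then
`T(ξ - x', ξ - x') → 0` by the bound in compatibility of `‖·‖'`, while `ξ - x'` is `‖·‖`-Cauchy;
compatibility of `‖·‖` then gives `ξ → x'` for `‖·‖`, so `x = x'`. Thus the identity map
`D[‖·‖] → D[‖·‖']` and its inverse have closed graphs, and the closed graph theorem bounds both.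
-/

namespace Paper

variable {V : Type} [AddCommGroup V]

theorem IsCauchyWrt.sub_const {n : V → ℝ} {ξ : ℕ → V} (hξ : IsCauchyWrt n ξ) (y : V) :
    IsCauchyWrt n fun k => ξ k - y := by
  simpa only [IsCauchyWrt, sub_sub_sub_cancel_right] using hξ

theorem IsPositiveForm.tendsto_re_sub_of_tendstoWrt {T : V → V → ℂ} {n : V → ℝ} {ξ : ℕ → V}
    (hpos : IsPositiveForm T) {α : ℝ} (hα : ∀ η, (T η η).re ≤ α * n η ^ 2) {x : V}
    (hx : TendstoWrt n ξ x) : Tendsto (fun k => (T (ξ k - x) (ξ k - x)).re) atTop (𝓝 0) := by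
  have hbound : Tendsto (fun k => α * n (ξ k - x) ^ 2) atTop (𝓝 0) := by
    simpa using (hx.pow 2).const_mul α
  exact squeeze_zero (fun k => (hpos _).2) (fun k => hα _) hbound

variable [Module ℂ V]

namespace IsNormFn

variable {n : V → ℝ}

theorem map_zero (h : IsNormFn n) : n 0 = 0 :=
  (h.1 0).mpr rfl

theorem map_neg (h : IsNormFn n) (x : V) : n (-x) = n x := by
  simpa using h.2.1 (-1) x

def toAddGroupNorm (h : IsNormFn n) : AddGroupNorm V where
  toFun := n
  map_zero' := h.map_zero
  add_le' := h.2.2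
  neg' := h.map_neg
  eq_zero_of_map_eq_zero' x := (h.1 x).mp

end IsNormFn

def NormedBy (_n : V → ℝ) : Type := V

namespace NormedBy

variable {n : V → ℝ}

instance : AddCommGroup (NormedBy n) := inferInstanceAs (AddCommGroup V)

instance : Module ℂ (NormedBy n) := inferInstanceAs (Module ℂ V)

variable (n) in
def equiv : V ≃ₗ[ℂ] NormedBy n := LinearEquiv.refl ℂ V

abbrev normedAddCommGroup (h : IsNormFn n) : NormedAddCommGroup (NormedBy n) :=
  AddGroupNorm.toNormedAddCommGroup (E := NormedBy n) h.toAddGroupNorm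

abbrev normedSpace (h : IsNormFn n) :
    letI := normedAddCommGroup h
    NormedSpace ℂ (NormedBy n) :=
  letI := normedAddCommGroup h
  ⟨fun c x => (h.2.1 c x).le⟩

theorem tendstoWrt_iff (h : IsNormFn n) {ξ : ℕ → V} {x : V} :
    TendstoWrt n ξ x ↔
      letI := normedAddCommGroup h
      Tendsto (fun k => equiv n (ξ k)) atTop (𝓝 (equiv n x)) := by
  let _ := normedAddCommGroup h
  rw [tendsto_iff_norm_sub_tendsto_zero]
  rfl

theorem isCauchyWrt_iff (h : IsNormFn n) {ξ : ℕ → V} :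
    IsCauchyWrt n ξ ↔
      letI := normedAddCommGroup h
      CauchySeq (fun k => equiv n (ξ k)) := by
  let _ := normedAddCommGroup h
  simp only [Metric.cauchySeq_iff, dist_eq_norm]
  exact ⟨fun hξ ε hε => (hξ ε hε).imp fun _ hN p hp q hq => hN p q hp hq,
    fun hξ ε hε => (hξ ε hε).imp fun _ hN p q hp hq => hN p hp q hq⟩

theorem completeSpace (h : IsNormFn n) (hc : CompleteWrt n) :
    letI := normedAddCommGroup h
    CompleteSpace (NormedBy n) := by
  let _ := normedAddCommGroup h
  refine Metric.complete_of_cauchySeq_tendsto fun ξ hξ => ?_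
  obtain ⟨x, hx⟩ := hc ((equiv n).symm ∘ ξ) ((isCauchyWrt_iff h).mpr hξ)
  exact ⟨equiv n x, (tendstoWrt_iff h).mp hx⟩

end NormedBy

namespace IsNormFn

variable {n : V → ℝ} {ξ : ℕ → V}

theorem tendstoWrt_unique (h : IsNormFn n) {x y : V} (hx : TendstoWrt n ξ x)
    (hy : TendstoWrt n ξ y) : x = y := by
  let _ := NormedBy.normedAddCommGroup h
  exact (NormedBy.equiv n).injective <|
    tendsto_nhds_unique ((NormedBy.tendstoWrt_iff h).mp hx) ((NormedBy.tendstoWrt_iff h).mp hy)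

theorem isCauchyWrt_of_tendstoWrt (h : IsNormFn n) {x : V} (hx : TendstoWrt n ξ x) :
    IsCauchyWrt n ξ := by
  let _ := NormedBy.normedAddCommGroup h
  exact (NormedBy.isCauchyWrt_iff h).mpr ((NormedBy.tendstoWrt_iff h).mp hx).cauchySeq

end IsNormFn

section ClosedGraph

variable {n₁ n₂ : V → ℝ}

theorem exists_le_mul_of_completeWrt (h₁ : IsNormFn n₁) (h₂ : IsNormFn n₂)
    (hc₁ : CompleteWrt n₁) (hc₂ : CompleteWrt n₂)
    (huniq : ∀ ξ x₁ x₂, TendstoWrt n₁ ξ x₁ → TendstoWrt n₂ ξ x₂ → x₁ = x₂) :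
    ∃ C, 0 < C ∧ ∀ x, n₂ x ≤ C * n₁ x := by
  let _ := NormedBy.normedAddCommGroup h₁
  let _ := NormedBy.normedAddCommGroup h₂
  let _ := NormedBy.normedSpace h₁
  let _ := NormedBy.normedSpace h₂
  have := NormedBy.completeSpace h₁ hc₁
  have := NormedBy.completeSpace h₂ hc₂
  let id₁₂ : NormedBy n₁ →ₗ[ℂ] NormedBy n₂ :=
    ((NormedBy.equiv n₁).symm.trans (NormedBy.equiv n₂)).toLinearMap
  have hcont : Continuous id₁₂ := id₁₂.continuous_of_seq_closed_graph fun u x y hx hy =>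
    (huniq _ _ _ ((NormedBy.tendstoWrt_iff h₁).mpr hx) ((NormedBy.tendstoWrt_iff h₂).mpr hy)).symm
  exact SemilinearMapClass.bound_of_continuous id₁₂ hcont

theorem equivNorms_of_completeWrt (h₁ : IsNormFn n₁) (h₂ : IsNormFn n₂)
    (hc₁ : CompleteWrt n₁) (hc₂ : CompleteWrt n₂)
    (huniq : ∀ ξ x₁ x₂, TendstoWrt n₁ ξ x₁ → TendstoWrt n₂ ξ x₂ → x₁ = x₂) :
    EquivNorms n₁ n₂ := by
  obtain ⟨c₂, hc₂_pos, le₂⟩ := exists_le_mul_of_completeWrt h₁ h₂ hc₁ hc₂ huniq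
  obtain ⟨c₁, hc₁_pos, le₁⟩ := exists_le_mul_of_completeWrt h₂ h₁ hc₂ hc₁
    fun ξ x₂ x₁ hx₂ hx₁ => (huniq ξ x₁ x₂ hx₁ hx₂).symm
  exact ⟨c₁, hc₁_pos, c₂, hc₂_pos, fun x => ⟨le₁ x, le₂ x⟩⟩

end ClosedGraph

theorem tendstoWrt_unique_of_compatibleWithForm {T : V → V → ℂ} {n n' : V → ℝ} {ξ : ℕ → V}
    (hpos : IsPositiveForm T) (hn : IsNormFn n) (hcompat : CompatibleWithForm T n)
    (hcompat' : CompatibleWithForm T n') {x x' : V}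
    (hx : TendstoWrt n ξ x) (hx' : TendstoWrt n' ξ x') : x = x' := by
  obtain ⟨α, -, hα⟩ := hcompat'.1
  have hnull := hpos.tendsto_re_sub_of_tendstoWrt hα hx'
  have hcauchy := (hn.isCauchyWrt_of_tendstoWrt hx).sub_const x'
  exact hn.tendstoWrt_unique hx (hcompat.2 _ hnull hcauchy)

theorem compatible_complete_norms_equivalent_general {H : Type} [NormedAddCommGroup H]
    [InnerProductSpace ℂ H] (D : Submodule ℂ H) (T : ↥D → ↥D → ℂ)
    (hpos : IsPositiveForm T)
    (n n' : ↥D → ℝ) (hn : IsNormFn n) (hn' : IsNormFn n')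
    (hcompat : CompatibleWithForm T n) (hcompat' : CompatibleWithForm T n')
    (hc : CompleteWrt n) (hc' : CompleteWrt n') :
    EquivNorms n n' :=
  equivNorms_of_completeWrt hn hn' hc hc' fun _ _ _ =>
    tendstoWrt_unique_of_compatibleWithForm hpos hn hcompat hcompat'

theorem compatible_complete_norms_equivalent {H : Type} [NormedAddCommGroup H]
    [InnerProductSpace ℂ H] [CompleteSpace H] (D : Submodule ℂ H) (T : ↥D → ↥D → ℂ)
    (hsesq : IsSesq T) (hpos : IsPositiveForm T)
    (n n' : ↥D → ℝ) (hn : IsNormFn n) (hn' : IsNormFn n')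
    (hcompat : CompatibleWithForm T n) (hcompat' : CompatibleWithForm T n')
    (hc : CompleteWrt n) (hc' : CompleteWrt n') :
    EquivNorms n n' :=
  compatible_complete_norms_equivalent_general D T hpos n n' hn hn' hcompat hcompat' hc hc'

end Paper
end
end

section
/- Let T be a positive sesquilinear form on D with N(T) = {0}, and let ‖·‖ and ‖·‖' be two norms on D making D a Banach space in each, such that T(ξ,ξ) ≤ α‖ξ‖² and T(ξ,ξ) ≤ α'‖ξ‖'² for all ξ ∈ D with constants α, α' > 0. Then ‖·‖ and ‖·‖' are equivalent. -/
noncomputable section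

open Filter Topology Function
open scoped InnerProductSpace

/-! The identity map `(D, n) → (D, n')` between the two Banach spaces has closed graph: if
`ξₖ → x` in `n` and `ξₖ → y` in `n'`, the bounds on `T` give `T(ξₖ - x, ξₖ - x) → 0` and
`T(ξₖ - y, ξₖ - y) → 0`, so the parallelogram law forces `T(x - y, x - y) = 0`, i.e. `x = y`.
By the closed graph theorem the identity is bounded in both directions. -/

namespace Paper

section Form

variable {V : Type} [AddCommGroup V] {T : V → V → ℂ}

theorem IsPositiveForm.tendsto_re_of_tendstoWrt (hpos : IsPositiveForm T) {n : V → ℝ} {α : ℝ}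
    (hα : ∀ ξ, (T ξ ξ).re ≤ α * n ξ ^ 2) {u : ℕ → V} {x : V} (hu : TendstoWrt n u x) :
    Tendsto (fun k => (T (u k - x) (u k - x)).re) atTop (𝓝 0) := by
  have hbound : Tendsto (fun k => α * n (u k - x) ^ 2) atTop (𝓝 0) := by
    simpa using (hu.pow 2).const_mul α
  exact squeeze_zero (fun k => (hpos _).2) (fun k => hα _) hbound

variable [Module ℂ V]

def IsSesq.toLinearMap₂ (hT : IsSesq T) : V →ₗ[ℂ] V →ₗ⋆[ℂ] ℂ :=
  LinearMap.mk₂'ₛₗ (RingHom.id ℂ) (starRingEnd ℂ) T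
    (fun _ _ η => (hT.1 η).map_add _ _) (fun _ _ η => (hT.1 η).map_smul _ _)
    (fun ξ η η' => by simpa using congrArg (starRingEnd ℂ) ((hT.2 ξ).map_add η η'))
    (fun c ξ η => by simpa using congrArg (starRingEnd ℂ) ((hT.2 ξ).map_smul c η))

theorem IsSesq.parallelogram (hT : IsSesq T) (a b : V) :
    T (a + b) (a + b) + T (a - b) (a - b) = 2 * T a a + 2 * T b b := by
  change hT.toLinearMap₂ (a + b) (a + b) + hT.toLinearMap₂ (a - b) (a - b) =
    2 * hT.toLinearMap₂ a a + 2 * hT.toLinearMap₂ b b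
  simp only [map_add, map_sub, LinearMap.add_apply, LinearMap.sub_apply]
  ring

theorem IsPositiveForm.re_sub_le (hpos : IsPositiveForm T) (hT : IsSesq T) (a b : V) :
    (T (a - b) (a - b)).re ≤ 2 * (T a a).re + 2 * (T b b).re := by
  have h := congrArg Complex.re (hT.parallelogram a b)
  simp only [Complex.add_re, Complex.mul_re, Complex.re_ofNat, Complex.im_ofNat, zero_mul,
    sub_zero] at h
  linarith [(hpos (a + b)).2]

theorem IsPositiveForm.eq_of_tendsto_re (hpos : IsPositiveForm T) (hT : IsSesq T)
    (hN : ∀ ξ, T ξ ξ = 0 → ξ = 0) {u : ℕ → V} {x y : V}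
    (hx : Tendsto (fun k => (T (u k - x) (u k - x)).re) atTop (𝓝 0))
    (hy : Tendsto (fun k => (T (u k - y) (u k - y)).re) atTop (𝓝 0)) : x = y := by
  have hle : ∀ k, (T (x - y) (x - y)).re ≤
      2 * (T (u k - y) (u k - y)).re + 2 * (T (u k - x) (u k - x)).re := fun k => by
    simpa using hpos.re_sub_le hT (u k - y) (u k - x)
  have hlim : Tendsto (fun k => 2 * (T (u k - y) (u k - y)).re + 2 * (T (u k - x) (u k - x)).re)
      atTop (𝓝 0) := by
    simpa using (hy.const_mul 2).add (hx.const_mul 2)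
  have hre : (T (x - y) (x - y)).re = 0 :=
    le_antisymm (le_of_tendsto_of_tendsto' tendsto_const_nhds hlim hle) (hpos _).2
  exact sub_eq_zero.1 (hN _ (Complex.ext hre (hpos _).1))

end Form

section NormFn

variable {V : Type} [AddCommGroup V] [Module ℂ V] {n : V → ℝ}

theorem IsNormFn.map_neg_s3 (hn : IsNormFn n) (x : V) : n (-x) = n x := by
  rw [← neg_one_smul ℂ x, hn.2.1]
  simp

/-- A type synonym, since `V` will carry two different normed structures. -/
def WithNormFn (_n : V → ℝ) : Type := V

instance : AddCommGroup (WithNormFn n) := inferInstanceAs (AddCommGroup V)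

instance : Module ℂ (WithNormFn n) := inferInstanceAs (Module ℂ V)

abbrev IsNormFn.normedAddCommGroup (hn : IsNormFn n) : NormedAddCommGroup (WithNormFn n) :=
  AddGroupNorm.toNormedAddCommGroup
    { toFun := n
      map_zero' := (hn.1 0).2 rfl
      add_le' := hn.2.2
      neg' := hn.map_neg_s3
      eq_zero_of_map_eq_zero' := fun x => (hn.1 x).1 }

theorem CompleteWrt.completeSpace (hn : IsNormFn n) (hc : CompleteWrt n) :
    letI := hn.normedAddCommGroup
    CompleteSpace (WithNormFn n) := by
  let := hn.normedAddCommGroup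
  refine Metric.complete_of_cauchySeq_tendsto fun u hu => ?_
  have hu' : IsCauchyWrt n u := fun ε hε => by
    obtain ⟨N, hN⟩ := Metric.cauchySeq_iff.1 hu ε hε
    exact ⟨N, fun p q hp hq => (dist_eq_norm (u p) (u q)).symm.trans_lt (hN p hp q hq)⟩
  obtain ⟨x, hx⟩ := hc u hu'
  exact ⟨x, tendsto_iff_norm_sub_tendsto_zero.2 hx⟩

theorem exists_le_mul_of_graph_closed {n' : V → ℝ} (hn : IsNormFn n) (hn' : IsNormFn n')
    (hc : CompleteWrt n) (hc' : CompleteWrt n')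
    (hgraph : ∀ {u : ℕ → V} {x y : V}, TendstoWrt n u x → TendstoWrt n' u y → x = y) :
    ∃ c : ℝ, 0 < c ∧ ∀ x : V, n' x ≤ c * n x := by
  let := hn.normedAddCommGroup
  let := hn'.normedAddCommGroup
  let : NormedSpace ℂ (WithNormFn n) := ⟨fun c x => (hn.2.1 c x).le⟩
  let : NormedSpace ℂ (WithNormFn n') := ⟨fun c x => (hn'.2.1 c x).le⟩
  have := hc.completeSpace hn
  have := hc'.completeSpace hn'
  let id' : WithNormFn n →ₗ[ℂ] WithNormFn n' := ⟨⟨fun x => x, fun _ _ => rfl⟩, fun _ _ => rfl⟩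
  have hcont : Continuous id' := id'.continuous_of_seq_closed_graph fun u x y hx hy =>
    (hgraph (tendsto_iff_norm_sub_tendsto_zero.1 hx) (tendsto_iff_norm_sub_tendsto_zero.1 hy)).symm
  exact SemilinearMapClass.bound_of_continuous id' hcont

end NormFn

theorem banach_norms_dominating_equivalent (D : Type) [AddCommGroup D] [Module ℂ D]
    (T : D → D → ℂ) (hsesq : IsSesq T) (hpos : IsPositiveForm T)
    (hN : ∀ ξ : D, T ξ ξ = 0 → ξ = 0)
    (n n' : D → ℝ) (hn : IsNormFn n) (hn' : IsNormFn n')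
    (hc : CompleteWrt n) (hc' : CompleteWrt n')
    (hb : ∃ α : ℝ, 0 < α ∧ ∀ ξ : D, (T ξ ξ).re ≤ α * n ξ ^ 2)
    (hb' : ∃ α' : ℝ, 0 < α' ∧ ∀ ξ : D, (T ξ ξ).re ≤ α' * n' ξ ^ 2) :
    EquivNorms n n' := by
  obtain ⟨α, -, hα⟩ := hb
  obtain ⟨α', -, hα'⟩ := hb'
  have hgraph {u : ℕ → D} {x y : D} (hx : TendstoWrt n u x) (hy : TendstoWrt n' u y) : x = y :=
    hpos.eq_of_tendsto_re hsesq hN (hpos.tendsto_re_of_tendstoWrt hα hx)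
      (hpos.tendsto_re_of_tendstoWrt hα' hy)
  obtain ⟨c₁, hc₁, h₁⟩ :=
    exists_le_mul_of_graph_closed hn' hn hc' hc fun hy hx => (hgraph hx hy).symm
  obtain ⟨c₂, hc₂, h₂⟩ := exists_le_mul_of_graph_closed hn hn' hc hc' hgraph
  exact ⟨c₁, hc₁, c₂, hc₂, fun x => ⟨h₁ x, h₂ x⟩⟩

end Paper
end
end

section
/- Let Ω be a sesquilinear form on H that is q-closable with respect to a norm ‖·‖_Ω on D = H. Then Ω is bounded on H, i.e., there is a constant C with |Ω(ξ,η)| ≤ C‖ξ‖‖η‖ for all ξ, η ∈ H. -/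
noncomputable section

open Filter Topology Function
open scoped InnerProductSpace

namespace Paper

theorem qclosable_on_whole_space_bounded {H : Type} [NormedAddCommGroup H]
    [InnerProductSpace ℂ H] [CompleteSpace H]
    (Ω : H → H → ℂ) (hsesq : IsSesq Ω) (n : H → ℝ) (hn : IsNormFn n)
    (hemb : ∃ α : ℝ, 0 < α ∧ ∀ ξ : H, ‖ξ‖ ≤ α * n ξ)
    (hseq : ∀ ξ : ℕ → H, Tendsto (fun k => ‖ξ k‖) atTop (𝓝 0) →
      IsCauchyWrt n ξ → Tendsto (fun k => n (ξ k)) atTop (𝓝 0))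
    (hrefl : CompletionIsReflexiveBanach n)
    (hb : ∃ β : ℝ, 0 < β ∧ ∀ ξ η : H, ‖Ω ξ η‖ ≤ β * n ξ * n η) :
    ∃ C : ℝ, ∀ ξ η : H, ‖Ω ξ η‖ ≤ C * ‖ξ‖ * ‖η‖ := by
  obtain ⟨β, hβ, hΩ⟩ := hb
  obtain ⟨M⟩ := hrefl
  letI := M.instGroup
  letI := M.instSpace
  letI := M.instComplete
  -- The map `j : H → E` is continuous by the closed graph theorem.
  have hcont : Continuous M.j := by
    apply M.j.continuous_of_seq_closed_graph
    intro u x y hux huy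
    -- `j ∘ u` converges, hence is Cauchy in E, hence `u` is `n`-Cauchy.
    have hcauchy : IsCauchyWrt n fun k => u k - x := by
      intro ε hε
      have hc : CauchySeq (M.j ∘ u) := huy.cauchySeq
      rw [Metric.cauchySeq_iff] at hc
      obtain ⟨N, hN⟩ := hc ε hε
      refine ⟨N, fun p q hp hq => ?_⟩
      have := hN p hp q hq
      rw [dist_eq_norm] at this
      have heq : n ((u p - x) - (u q - x)) = ‖M.j (u p) - M.j (u q)‖ := by
        rw [sub_sub_sub_cancel_right, ← map_sub, M.isometry]
      rw [heq]
      exact this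
    have hnorm0 : Tendsto (fun k => ‖u k - x‖) atTop (𝓝 0) := by
      rw [← tendsto_iff_norm_sub_tendsto_zero] at *
      exact hux
    have hn0 := hseq (fun k => u k - x) hnorm0 hcauchy
    have hjn : ∀ k, n (u k - x) = ‖M.j (u k) - M.j x‖ := fun k => by
      rw [← map_sub, M.isometry]
    have : Tendsto (fun k => ‖M.j (u k) - M.j x‖) atTop (𝓝 0) := by
      simpa [hjn] using hn0
    have hjlim : Tendsto (M.j ∘ u) atTop (𝓝 (M.j x)) := by
      rw [tendsto_iff_norm_sub_tendsto_zero]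
      exact this
    exact tendsto_nhds_unique huy hjlim
  obtain ⟨C, hC, hCb⟩ := SemilinearMapClass.bound_of_continuous M.j hcont
  refine ⟨β * C * C, fun ξ η => ?_⟩
  have h1 := hΩ ξ η
  have h2 : n ξ ≤ C * ‖ξ‖ := by rw [← M.isometry]; exact hCb ξ
  have h3 : n η ≤ C * ‖η‖ := by rw [← M.isometry]; exact hCb η
  have h4 : 0 ≤ n ξ := by rw [← M.isometry]; exact norm_nonneg _
  have h5 : 0 ≤ n η := by rw [← M.isometry]; exact norm_nonneg _
  nlinarith [norm_nonneg ξ, norm_nonneg η, norm_nonneg (Ω ξ η),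
    mul_le_mul h2 h3 h5 (by positivity : (0:ℝ) ≤ C * ‖ξ‖)]

end Paper
end
end

section
/- If a sesquilinear form Ω on a dense subspace D of a Hilbert space H is q-closed with respect to two norms ‖·‖_Ω and ‖·‖'_Ω on D, then these two norms are equivalent. -/
noncomputable section

open Filter Topology Function
open scoped InnerProductSpace

namespace Paper

private lemma dominates {H : Type} [NormedAddCommGroup H] [InnerProductSpace ℂ H]
    (D : Submodule ℂ H) (n n' : ↥D → ℝ) (hn : IsNormFn n)
    (he : EmbedsContinuously D n) (he' : EmbedsContinuously D n')
    (hb : IsReflexiveBanachWrt n) (hb' : IsReflexiveBanachWrt n') :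
    ∃ c : ℝ, 0 < c ∧ ∀ ξ : ↥D, n' ξ ≤ c * n ξ := by
  obtain ⟨M, hM⟩ := hb
  obtain ⟨M', hM'⟩ := hb'
  letI := M.instGroup; letI := M.instSpace; letI := M.instComplete
  letI := M'.instGroup; letI := M'.instSpace; letI := M'.instComplete
  obtain ⟨α, hα, hemb⟩ := he
  obtain ⟨α', hα', hemb'⟩ := he'
  have hinj : Function.Injective M.j := by
    intro x y hxy
    have h0 : M.j (x - y) = 0 := by rw [map_sub, hxy, sub_self]
    have : n (x - y) = 0 := by
      have := M.isometry (x - y); rw [h0] at this; simpa using this.symm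
    have := (hn.1 (x - y)).mp this
    exact sub_eq_zero.mp this
  have hinj' : Function.Injective M'.j := by
    intro x y hxy
    have h0 : M'.j (x - y) = 0 := by rw [map_sub, hxy, sub_self]
    have h1 : ‖(((x - y : ↥D)) : H)‖ = 0 := by
      have hle := hemb' (x - y)
      have hz : n' (x - y) = 0 := by
        have := M'.isometry (x - y); rw [h0] at this; simpa using this.symm
      have := hle.trans (by rw [hz, mul_zero])
      exact le_antisymm this (norm_nonneg _)
    have : ((x - y : ↥D) : H) = 0 := norm_eq_zero.mp h1
    have : (x - y : ↥D) = 0 := Subtype.coe_injective (by simpa using this)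
    exact sub_eq_zero.mp this
  let e : ↥D ≃ₗ[ℂ] M.E := LinearEquiv.ofBijective M.j ⟨hinj, hM⟩
  let e' : ↥D ≃ₗ[ℂ] M'.E := LinearEquiv.ofBijective M'.j ⟨hinj', hM'⟩
  let g : M.E →ₗ[ℂ] M'.E := e'.toLinearMap.comp e.symm.toLinearMap
  have toH : ∀ (ξ : ℕ → ↥D) (ζ : ↥D) (αa : ℝ), 0 < αa →
      (∀ x : ↥D, ‖(x : H)‖ ≤ αa * n x) →
      Tendsto (fun k => n (ξ k - ζ)) atTop (𝓝 0) →
      Tendsto (fun k => ((ξ k : H))) atTop (𝓝 (ζ : H)) := by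
    intro ξ ζ αa hαa hembA hconv
    rw [tendsto_iff_norm_sub_tendsto_zero]
    have hsq : Tendsto (fun k => αa * n (ξ k - ζ)) atTop (𝓝 0) := by
      simpa using hconv.const_mul αa
    refine squeeze_zero (fun k => norm_nonneg _) (fun k => ?_) hsq
    have := hembA (ξ k - ζ)
    simpa using this
  have toH' : ∀ (ξ : ℕ → ↥D) (ζ : ↥D),
      Tendsto (fun k => n' (ξ k - ζ)) atTop (𝓝 0) →
      Tendsto (fun k => ((ξ k : H))) atTop (𝓝 (ζ : H)) := by
    intro ξ ζ hconv
    rw [tendsto_iff_norm_sub_tendsto_zero]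
    have hsq : Tendsto (fun k => α' * n' (ξ k - ζ)) atTop (𝓝 0) := by
      simpa using hconv.const_mul α'
    refine squeeze_zero (fun k => norm_nonneg _) (fun k => ?_) hsq
    have := hemb' (ξ k - ζ)
    simpa using this
  have hcont : Continuous g := by
    apply g.continuous_of_seq_closed_graph
    intro u x y hu hgu
    set ξ : ℕ → ↥D := fun k => e.symm (u k) with hξ
    have h1 : Tendsto (fun k => n (ξ k - e.symm x)) atTop (𝓝 0) := by
      have : ∀ k, n (ξ k - e.symm x) = ‖u k - x‖ := by
        intro k
        have : M.j (ξ k - e.symm x) = u k - x := by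
          have h2 : M.j (e.symm (u k)) = u k := e.apply_symm_apply (u k)
          have h3 : M.j (e.symm x) = x := e.apply_symm_apply x
          rw [map_sub, h2, h3]
        rw [← M.isometry, this]
      simp_rw [this]
      exact tendsto_iff_norm_sub_tendsto_zero.mp hu
    have h1' : Tendsto (fun k => n' (ξ k - e'.symm y)) atTop (𝓝 0) := by
      have : ∀ k, n' (ξ k - e'.symm y) = ‖g (u k) - y‖ := by
        intro k
        have hgk : M'.j (ξ k) = g (u k) := rfl
        have h4 : M'.j (e'.symm y) = y := by
          show e' (e'.symm y) = y; exact e'.apply_symm_apply y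
        have : M'.j (ξ k - e'.symm y) = g (u k) - y := by
          rw [map_sub, hgk, h4]
        rw [← M'.isometry, this]
      simp_rw [this]
      exact tendsto_iff_norm_sub_tendsto_zero.mp hgu
    have hA := toH ξ (e.symm x) α hα hemb h1
    have hB := toH' ξ (e'.symm y) h1'
    have heq : ((e.symm x : ↥D) : H) = ((e'.symm y : ↥D) : H) :=
      tendsto_nhds_unique hA hB
    have heq2 : e.symm x = e'.symm y := Subtype.coe_injective heq
    show y = g x
    calc y = e' (e'.symm y) := (e'.apply_symm_apply y).symm
      _ = e' (e.symm x) := by rw [heq2]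
      _ = g x := rfl
  let G : M.E →L[ℂ] M'.E := ⟨g, hcont⟩
  refine ⟨‖G‖ + 1, by positivity, fun ξ => ?_⟩
  have hle := G.le_opNorm (M.j ξ)
  have h1 : G (M.j ξ) = M'.j ξ := by
    show e' (e.symm (e ξ)) = M'.j ξ
    rw [e.symm_apply_apply]; rfl
  have h2 : ‖M.j ξ‖ = n ξ := M.isometry ξ
  have h3 : ‖M'.j ξ‖ = n' ξ := M'.isometry ξ
  rw [h1, h2, h3] at hle
  have hn0 : 0 ≤ n ξ := by
    have := M.isometry ξ; rw [← this]; exact norm_nonneg _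
  nlinarith [norm_nonneg G]


theorem qclosed_norms_equivalent {H : Type} [NormedAddCommGroup H] [InnerProductSpace ℂ H]
    [CompleteSpace H] (D : Submodule ℂ H) (hD : Dense (D : Set H))
    (Ω : ↥D → ↥D → ℂ) (hsesq : IsSesq Ω) (n n' : ↥D → ℝ)
    (hq : IsQClosed D Ω n) (hq' : IsQClosed D Ω n') :
    EquivNorms n n' := by
  obtain ⟨hn, ⟨he, _⟩, hb, _⟩ := hq
  obtain ⟨hn', ⟨he', _⟩, hb', _⟩ := hq'
  obtain ⟨c₂, hc₂, h₂⟩ := dominates D n n' hn he he' hb hb'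
  obtain ⟨c₁, hc₁, h₁⟩ := dominates D n' n hn' he' he hb' hb
  exact ⟨c₁, hc₁, c₂, hc₂, fun ξ => ⟨h₁ ξ, h₂ ξ⟩⟩

end Paper
end
end

section
/- Let Ω be a q-closed sesquilinear form on D ⊆ H with respect to ‖·‖_Ω, let E = D[‖·‖_Ω] with conjugate dual E^×, and for a bounded form Υ on H let X_Υ : E → E^× be the bounded operator with ⟨X_Υ ξ, η⟩ = (Ω+Υ)(ξ,η). Then Υ ∈ P₀(Ω) if and only if X_Υ is a bijection of E onto E^×, if and only if X_Υ is invertible with bounded inverse. -/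
noncomputable section

open Filter Topology Function
open scoped InnerProductSpace

/-! Since `D` is complete for `‖·‖_Ω`, it is isometric to a Banach space `E`, and the bounded form
`Ω + Υ` gives a bounded conjugate-linear operator `X_Υ : E → E^×`. Membership in `P₀(Ω)` says
exactly that `X_Υ` is bijective, and then the bounded inverse theorem yields
`‖ξ‖_Ω ≤ ‖X_Υ⁻¹‖ ‖X_Υ ξ‖`, where `‖X_Υ ξ‖ = sup {|(Ω + Υ)(ξ, η)| : ‖η‖_Ω = 1}`. -/

namespace Paper

section Sesquilinear

variable {V W : Type} [AddCommGroup V] [Module ℂ V] [AddCommGroup W] [Module ℂ W]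

theorem IsSesq.add {Ω Ψ : V → V → ℂ} (hΩ : IsSesq Ω) (hΨ : IsSesq Ψ) :
    IsSesq fun a b => Ω a b + Ψ a b :=
  ⟨fun η => (hΩ.1 η).mk' _ + (hΨ.1 η).mk' _ |>.isLinear,
    fun ξ => ⟨fun η η' => by simp only [map_add, (hΩ.2 ξ).map_add, (hΨ.2 ξ).map_add]; ring,
      fun c η => by simp only [map_add, (hΩ.2 ξ).map_smul, (hΨ.2 ξ).map_smul, smul_add]⟩⟩

theorem IsSesq.comp {Υ : W → W → ℂ} (hΥ : IsSesq Υ) (f : V →ₗ[ℂ] W) :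
    IsSesq fun a b => Υ (f a) (f b) :=
  ⟨fun η => ((hΥ.1 (f η)).mk' _ ∘ₗ f).isLinear, fun ξ => ((hΥ.2 (f ξ)).mk' _ ∘ₗ f).isLinear⟩

theorem IsSesq.injective_iff {Θ : V → V → ℂ} (hΘ : IsSesq Θ) :
    Injective Θ ↔ ∀ ξ, (∀ η, Θ ξ η = 0) → ξ = 0 := by
  let L : V →+ (V → ℂ) := AddMonoidHom.mk' Θ fun a b => funext fun η => (hΘ.1 η).map_add a b
  exact (injective_iff_map_eq_zero L).trans <| by
    simp only [L, AddMonoidHom.mk'_apply, funext_iff, Pi.zero_apply]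

end Sesquilinear

section Operator

variable {E : Type} [NormedAddCommGroup E] [NormedSpace ℂ E]

/-- The operator `X_Υ` of the paper, with the conjugate dual `E^×` realised as `E →L[ℂ] ℂ`
through complex conjugation. -/
def IsSesq.mkContinuous₂ {B : E → E → ℂ} (hB : IsSesq B) (K : ℝ)
    (hK : ∀ v w, ‖B v w‖ ≤ K * ‖v‖ * ‖w‖) : E →L⋆[ℂ] E →L[ℂ] ℂ :=
  LinearMap.mkContinuous₂
    (LinearMap.mk₂'ₛₗ (starRingEnd ℂ) (RingHom.id ℂ) (fun v w => starRingEnd ℂ (B v w))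
      (fun v v' w => by rw [(hB.1 w).map_add, map_add])
      (fun c v w => by rw [(hB.1 w).map_smul, smul_eq_mul, map_mul, smul_eq_mul])
      (fun v => (hB.2 v).map_add) (fun c v => (hB.2 v).map_smul c))
    K fun v w => by simpa using hK v w

@[simp]
theorem IsSesq.mkContinuous₂_apply {B : E → E → ℂ} (hB : IsSesq B) {K : ℝ}
    (hK : ∀ v w, ‖B v w‖ ≤ K * ‖v‖ * ‖w‖) (v w : E) :
    hB.mkContinuous₂ K hK v w = starRingEnd ℂ (B v w) :=
  rfl

end Operator

theorem exists_pos_mul_norm_le_of_bijective {𝕜 𝕜' : Type*} [NontriviallyNormedField 𝕜]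
    [NontriviallyNormedField 𝕜'] {σ : 𝕜 →+* 𝕜'} {σ' : 𝕜' →+* 𝕜} [RingHomInvPair σ σ']
    [RingHomInvPair σ' σ] [RingHomIsometric σ] [RingHomIsometric σ']
    {E F : Type*} [NormedAddCommGroup E] [NormedSpace 𝕜 E] [CompleteSpace E]
    [NormedAddCommGroup F] [NormedSpace 𝕜' F] [CompleteSpace F]
    (X : E →SL[σ] F) (hX : Bijective X) : ∃ c, 0 < c ∧ ∀ v, c * ‖v‖ ≤ ‖X v‖ := by
  let S : F →SL[σ'] E :=
    (ContinuousLinearEquiv.ofBijective X (LinearMap.ker_eq_bot.2 hX.1)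
      (LinearMap.range_eq_top.2 hX.2)).symm
  refine ⟨(‖S‖ + 1)⁻¹, by positivity, fun v => ?_⟩
  rw [inv_mul_le_iff₀ (by positivity)]
  calc ‖v‖ = ‖S (X v)‖ := by
        rw [show S (X v) = v from ContinuousLinearEquiv.ofBijective_symm_apply_apply _ _ _ v]
    _ ≤ ‖S‖ * ‖X v‖ := S.le_opNorm _
    _ ≤ (‖S‖ + 1) * ‖X v‖ := by gcongr; linarith

theorem BanachModel.j_injective {V : Type} [AddCommGroup V] [Module ℂ V] {n : V → ℝ}
    (M : BanachModel V n) (hn : IsNormFn n) : Injective M.j := by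
  let := M.instGroup
  refine (injective_iff_map_eq_zero M.j).2 fun x hx => (hn.1 x).1 ?_
  rw [← M.isometry, hx, norm_zero]

section ConjugateDual

variable {H : Type} [NormedAddCommGroup H] [InnerProductSpace ℂ H] {D : Submodule ℂ H}
  {n : D → ℝ}

theorem BoundedOn.add_of_bound {Ω : D → D → ℂ} {Υ : H → H → ℂ} {C : ℝ}
    (hΩ : BoundedOn D Ω n) (hn : EmbedsContinuously D n)
    (hΥ : ∀ x y, ‖Υ x y‖ ≤ C * ‖x‖ * ‖y‖) : BoundedOn D (fun ξ η => Ω ξ η + Υ ξ η) n := by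
  obtain ⟨β, hβ, hΩ⟩ := hΩ
  obtain ⟨α, hα, hn⟩ := hn
  refine ⟨β + α ^ 2 * max C 0, by positivity, fun ξ η => ?_⟩
  have hΥ' : ‖Υ ξ η‖ ≤ max C 0 * (α * n ξ) * (α * n η) :=
    calc ‖Υ ξ η‖ ≤ C * ‖(ξ : H)‖ * ‖(η : H)‖ := hΥ _ _
      _ ≤ max C 0 * ‖(ξ : H)‖ * ‖(η : H)‖ := by gcongr; exact le_max_left _ _
      _ ≤ max C 0 * (α * n ξ) * (α * n η) := by
        gcongr
        exacts [mul_nonneg (le_max_right _ _) ((norm_nonneg _).trans (hn ξ)), hn ξ, hn η]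
  calc ‖Ω ξ η + Υ ξ η‖ ≤ ‖Ω ξ η‖ + ‖Υ ξ η‖ := norm_add_le _ _
    _ ≤ β * n ξ * n η + max C 0 * (α * n ξ) * (α * n η) := add_le_add (hΩ ξ η) hΥ'
    _ = (β + α ^ 2 * max C 0) * n ξ * n η := by ring

variable {E : Type} [NormedAddCommGroup E] [NormedSpace ℂ E]

theorem memConjDual_conj_comp (e : D →ₗ[ℂ] E) (he : ∀ ξ, ‖e ξ‖ = n ξ) (f : E →L[ℂ] ℂ) :
    MemConjDual D n fun η => starRingEnd ℂ (f (e η)) :=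
  ⟨fun ξ η => by simp only [map_add], fun c ξ => by simp only [map_smul, smul_eq_mul, map_mul],
    ‖f‖, fun ξ => by simpa only [Complex.norm_conj, he] using f.le_opNorm (e ξ)⟩

variable (e : D ≃ₗ[ℂ] E) {Θ : D → D → ℂ} (hΘ : IsSesq Θ) {K : ℝ}
  (hK : ∀ v w, ‖Θ (e.symm v) (e.symm w)‖ ≤ K * ‖v‖ * ‖w‖)

theorem formSup_eq_norm_mkContinuous₂ (he : ∀ ξ, ‖e ξ‖ = n ξ) (ξ : D) :
    FormSup D Θ n ξ = ‖(hΘ.comp e.symm.toLinearMap).mkContinuous₂ K hK (e ξ)‖ := by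
  rw [← ContinuousLinearMap.sSup_sphere_eq_norm, FormSup]
  congr 1
  ext r
  simp only [Set.mem_ofPred_eq, Set.mem_image, Metric.mem_sphere, dist_zero_right,
    IsSesq.mkContinuous₂_apply, Complex.norm_conj, LinearEquiv.coe_coe, e.surjective.exists,
    e.symm_apply_apply, he, eq_comm]

theorem bijective_mkContinuous₂ (he : ∀ ξ, ‖e ξ‖ = n ξ) (hinj : Injective Θ)
    (hsurj : ∀ Λ, MemConjDual D n Λ → ∃ ξ, Θ ξ = Λ) :
    Bijective ((hΘ.comp e.symm.toLinearMap).mkContinuous₂ K hK) := by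
  constructor
  · refine (injective_iff_map_eq_zero _).2 fun v hv => e.symm.injective ?_
    refine (hΘ.injective_iff.1 hinj _ fun η => ?_).trans e.symm.map_zero.symm
    simpa using congr($hv (e η))
  · intro f
    obtain ⟨ξ, hξ⟩ := hsurj _ (memConjDual_conj_comp e.toLinearMap he f)
    refine ⟨e ξ, ContinuousLinearMap.ext fun w => ?_⟩
    simp [hξ]

end ConjugateDual

theorem exists_pos_mul_le_formSup {H : Type} [NormedAddCommGroup H] [InnerProductSpace ℂ H]
    {D : Submodule ℂ H} {Θ : D → D → ℂ} {n : D → ℝ} (hΘ : IsSesq Θ) (hn : IsNormFn n)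
    (hrefl : IsReflexiveBanachWrt n) (hbdd : BoundedOn D Θ n) (hinj : Injective Θ)
    (hsurj : ∀ Λ, MemConjDual D n Λ → ∃ ξ, Θ ξ = Λ) :
    ∃ c, 0 < c ∧ ∀ ξ, c * n ξ ≤ FormSup D Θ n ξ := by
  obtain ⟨M, hj⟩ := hrefl
  let := M.instGroup
  let := M.instSpace
  let := M.instComplete
  let e : D ≃ₗ[ℂ] M.E := .ofBijective M.j ⟨M.j_injective hn, hj⟩
  have he : ∀ ξ, ‖e ξ‖ = n ξ := M.isometry
  obtain ⟨K, -, hΘK⟩ := hbdd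
  have hK : ∀ v w, ‖Θ (e.symm v) (e.symm w)‖ ≤ K * ‖v‖ * ‖w‖ := fun v w => by
    simpa only [← he, e.apply_symm_apply] using hΘK (e.symm v) (e.symm w)
  obtain ⟨c, hc, hX⟩ := exists_pos_mul_norm_le_of_bijective _
    (bijective_mkContinuous₂ e hΘ hK he hinj hsurj)
  refine ⟨c, hc, fun ξ => ?_⟩
  simpa only [formSup_eq_norm_mkContinuous₂ e hΘ hK he, he] using hX (e ξ)

theorem inP0_iff_bijection_general {H : Type} [NormedAddCommGroup H] [InnerProductSpace ℂ H]
    (D : Submodule ℂ H)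
    (Ω : ↥D → ↥D → ℂ) (hsesq : IsSesq Ω) (n : ↥D → ℝ) (hq : IsQClosed D Ω n)
    (Υ : H → H → ℂ) (hΥ : IsBoundedForm Υ) :
    (InP0 D Ω n Υ ↔
      (Function.Injective (fun ξ : ↥D => (fun η : ↥D => Ω ξ η + Υ ↑ξ ↑η)) ∧
        ∀ Λ : ↥D → ℂ, MemConjDual D n Λ →
          ∃ ξ : ↥D, (fun η : ↥D => Ω ξ η + Υ ↑ξ ↑η) = Λ)) ∧
    ((Function.Injective (fun ξ : ↥D => (fun η : ↥D => Ω ξ η + Υ ↑ξ ↑η)) ∧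
        ∀ Λ : ↥D → ℂ, MemConjDual D n Λ →
          ∃ ξ : ↥D, (fun η : ↥D => Ω ξ η + Υ ↑ξ ↑η) = Λ) ↔
      (Function.Injective (fun ξ : ↥D => (fun η : ↥D => Ω ξ η + Υ ↑ξ ↑η)) ∧
        (∀ Λ : ↥D → ℂ, MemConjDual D n Λ →
          ∃ ξ : ↥D, (fun η : ↥D => Ω ξ η + Υ ↑ξ ↑η) = Λ) ∧
        ∃ c : ℝ, 0 < c ∧ ∀ ξ : ↥D,
          c * n ξ ≤ FormSup D (fun a b => Ω a b + Υ ↑a ↑b) n ξ)) := by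
  obtain ⟨hn, ⟨hemb, -⟩, hrefl, hbdd⟩ := hq
  obtain ⟨hΥsesq, C, hC⟩ := hΥ
  have hΘ : IsSesq fun ξ η : D => Ω ξ η + Υ ξ η := hsesq.add (hΥsesq.comp D.subtype)
  have hrep (Λ : D → ℂ) : (∃ ξ : D, ∀ η, Λ η = Ω ξ η + Υ ξ η) ↔
      ∃ ξ : D, (fun η : D => Ω ξ η + Υ ξ η) = Λ := by
    simp only [funext_iff, eq_comm]
  refine ⟨and_congr hΘ.injective_iff.symm (forall₂_congr fun Λ _ => hrep Λ), ?_⟩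
  refine ⟨fun ⟨hinj, hsurj⟩ => ⟨hinj, hsurj, ?_⟩, fun h => ⟨h.1, h.2.1⟩⟩
  exact exists_pos_mul_le_formSup hΘ hn hrefl (hbdd.add_of_bound hemb hC) hinj hsurj

theorem inP0_iff_bijection {H : Type} [NormedAddCommGroup H] [InnerProductSpace ℂ H]
    [CompleteSpace H] (D : Submodule ℂ H) (hD : Dense (D : Set H))
    (Ω : ↥D → ↥D → ℂ) (hsesq : IsSesq Ω) (n : ↥D → ℝ) (hq : IsQClosed D Ω n)
    (Υ : H → H → ℂ) (hΥ : IsBoundedForm Υ) :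
    (InP0 D Ω n Υ ↔
      (Function.Injective (fun ξ : ↥D => (fun η : ↥D => Ω ξ η + Υ ↑ξ ↑η)) ∧
        ∀ Λ : ↥D → ℂ, MemConjDual D n Λ →
          ∃ ξ : ↥D, (fun η : ↥D => Ω ξ η + Υ ↑ξ ↑η) = Λ)) ∧
    ((Function.Injective (fun ξ : ↥D => (fun η : ↥D => Ω ξ η + Υ ↑ξ ↑η)) ∧
        ∀ Λ : ↥D → ℂ, MemConjDual D n Λ →
          ∃ ξ : ↥D, (fun η : ↥D => Ω ξ η + Υ ↑ξ ↑η) = Λ) ↔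
      (Function.Injective (fun ξ : ↥D => (fun η : ↥D => Ω ξ η + Υ ↑ξ ↑η)) ∧
        (∀ Λ : ↥D → ℂ, MemConjDual D n Λ →
          ∃ ξ : ↥D, (fun η : ↥D => Ω ξ η + Υ ↑ξ ↑η) = Λ) ∧
        ∃ c : ℝ, 0 < c ∧ ∀ ξ : ↥D,
          c * n ξ ≤ FormSup D (fun a b => Ω a b + Υ ↑a ↑b) n ξ)) :=
  inP0_iff_bijection_general D Ω hsesq n hq Υ hΥ

end Paper
end
end

section
/- If Ω is a q-closed sesquilinear form on D with respect to ‖·‖_Ω that is not solvable with respect to ‖·‖_Ω, then Ω is not solvable with respect to any norm on D. -/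
noncomputable section

open Filter Topology Function
open scoped InnerProductSpace

namespace Paper


lemma IsNormFn.zero' {V : Type} [AddCommGroup V] [Module ℂ V] {n : V → ℝ}
    (hn : IsNormFn n) : n 0 = 0 := (hn.1 0).mpr rfl

lemma IsNormFn.nonneg' {V : Type} [AddCommGroup V] [Module ℂ V] {n : V → ℝ}
    (hn : IsNormFn n) (x : V) : 0 ≤ n x := by
  have hneg : n (-x) = n x := by
    have := hn.2.1 (-1 : ℂ) x
    simpa using this
  have h0 : n 0 ≤ n x + n (-x) := by
    have := hn.2.2 x (-x)
    simpa using this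
  rw [hn.zero', hneg] at h0
  linarith

/-- Closed graph argument: two complete norms on `D`, each dominating the `H`-norm,
are comparable. -/
lemma norm_dominates {H : Type} [NormedAddCommGroup H] [InnerProductSpace ℂ H]
    (D : Submodule ℂ H) (n n' : ↥D → ℝ)
    (hn : IsNormFn n) (hn' : IsNormFn n')
    (he : EmbedsContinuously D n) (he' : EmbedsContinuously D n')
    (hb : IsReflexiveBanachWrt n) (hb' : IsReflexiveBanachWrt n') :
    ∃ c : ℝ, 0 < c ∧ ∀ ξ : ↥D, n ξ ≤ c * n' ξ := by
  obtain ⟨M, hM⟩ := hb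
  obtain ⟨M', hM'⟩ := hb'
  obtain ⟨α, hα0, hα⟩ := he
  obtain ⟨α', hα'0, hα'⟩ := he'
  letI := M.instGroup; letI := M.instSpace; letI := M.instComplete
  letI := M'.instGroup; letI := M'.instSpace; letI := M'.instComplete
  have hinj' : Function.Injective M'.j := by
    intro x y hxy
    have h1 : n' (x - y) = 0 := by
      have h2 := M'.isometry (x - y)
      rw [map_sub, hxy, sub_self] at h2
      simpa using h2.symm
    exact sub_eq_zero.mp ((hn'.1 _).mp h1)
  let e' : ↥D ≃ₗ[ℂ] M'.E := LinearEquiv.ofBijective M'.j ⟨hinj', hM'⟩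
  let T : M'.E →ₗ[ℂ] M.E := M.j ∘ₗ (e'.symm : M'.E →ₗ[ℂ] ↥D)
  have hTapp : ∀ ξ : ↥D, T (M'.j ξ) = M.j ξ := by
    intro ξ
    have : e'.symm (M'.j ξ) = ξ := e'.symm_apply_apply ξ
    simp [T, this]
  have hseq : ∀ (u : ℕ → M'.E) (x : M'.E) (y : M.E), Tendsto u atTop (𝓝 x) →
      Tendsto (T ∘ u) atTop (𝓝 y) → y = T x := by
    intro u x y hu hTu
    obtain ⟨b, rfl⟩ := hM y
    set ξ : ℕ → ↥D := fun k => e'.symm (u k) with hξ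
    set a : ↥D := e'.symm x with ha
    -- convergence to a in H
    have key : ∀ (β : ℝ) (m : ↥D → ℝ) (v : ℕ → ↥D) (w : ↥D), 0 < β →
        (∀ z : ↥D, ‖(z : H)‖ ≤ β * m z) →
        Tendsto (fun k => m (v k - w)) atTop (𝓝 0) →
        Tendsto (fun k => ((v k : H))) atTop (𝓝 (w : H)) := by
      intro β m v w hβ hm hten
      rw [tendsto_iff_norm_sub_tendsto_zero]
      have hsq : Tendsto (fun k => β * m (v k - w)) atTop (𝓝 0) := by
        simpa using hten.const_mul β
      refine squeeze_zero (fun k => norm_nonneg _) (fun k => ?_) hsq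
      have := hm (v k - w)
      simpa using this
    have h1 : Tendsto (fun k => ((ξ k : H))) atTop (𝓝 (a : H)) := by
      refine key α' n' ξ a hα'0 hα' ?_
      have : ∀ k, n' (ξ k - a) = ‖u k - x‖ := by
        intro k
        have := M'.isometry (ξ k - a)
        rw [map_sub] at this
        have h2 : M'.j (ξ k) = u k := e'.apply_symm_apply (u k)
        have h3 : M'.j a = x := e'.apply_symm_apply x
        rw [h2, h3] at this
        exact this.symm
      simp only [this]
      exact tendsto_iff_norm_sub_tendsto_zero.mp hu
    have h2 : Tendsto (fun k => ((ξ k : H))) atTop (𝓝 (b : H)) := by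
      refine key α n ξ b hα0 hα ?_
      have : ∀ k, n (ξ k - b) = ‖T (u k) - M.j b‖ := by
        intro k
        have := M.isometry (ξ k - b)
        rw [map_sub] at this
        have h4 : M.j (ξ k) = T (u k) := rfl
        rw [h4] at this
        exact this.symm
      simp only [this]
      exact tendsto_iff_norm_sub_tendsto_zero.mp hTu
    have hab : (a : H) = (b : H) := tendsto_nhds_unique h1 h2
    have hab' : a = b := Subtype.ext hab
    have : T x = M.j a := by simp [T, ha]
    rw [this, hab']
  let T' : M'.E →L[ℂ] M.E := ContinuousLinearMap.ofSeqClosedGraph hseq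
  refine ⟨max ‖T'‖ 1, lt_of_lt_of_le one_pos (le_max_right _ _), fun ξ => ?_⟩
  have h5 : ‖T' (M'.j ξ)‖ ≤ ‖T'‖ * ‖M'.j ξ‖ := T'.le_opNorm _
  have h6 : T' (M'.j ξ) = M.j ξ := hTapp ξ
  rw [h6, M.isometry, M'.isometry] at h5
  calc n ξ ≤ ‖T'‖ * n' ξ := h5
    _ ≤ max ‖T'‖ 1 * n' ξ :=
      mul_le_mul_of_nonneg_right (le_max_left _ _) (hn'.nonneg' ξ)

theorem not_solvable_wrt_any_norm {H : Type} [NormedAddCommGroup H] [InnerProductSpace ℂ H]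
    [CompleteSpace H] (D : Submodule ℂ H) (hD : Dense (D : Set H))
    (Ω : ↥D → ↥D → ℂ) (hsesq : IsSesq Ω) (n : ↥D → ℝ)
    (hq : IsQClosed D Ω n) (hns : ¬ IsSolvable D Ω n) :
    ∀ n' : ↥D → ℝ, ¬ IsSolvable D Ω n' := by
  intro n' hs'
  obtain ⟨hq', Υ, hΥ, hker, hrep⟩ := hs'
  obtain ⟨hn, hcomp, hrefl, hbdd⟩ := hq
  obtain ⟨hn', hcomp', hrefl', hbdd'⟩ := hq'
  obtain ⟨c, hc0, hc⟩ := norm_dominates D n n' hn hn' hcomp.1 hcomp'.1 hrefl hrefl'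
  apply hns
  refine ⟨⟨hn, hcomp, hrefl, hbdd⟩, Υ, hΥ, hker, ?_⟩
  intro Λ hΛ
  obtain ⟨hadd, hsmul, C, hC⟩ := hΛ
  refine hrep Λ ⟨hadd, hsmul, max C 0 * c, fun x => ?_⟩
  calc ‖Λ x‖ ≤ C * n x := hC x
    _ ≤ max C 0 * n x := mul_le_mul_of_nonneg_right (le_max_left _ _) (hn.nonneg' x)
    _ ≤ max C 0 * (c * n' x) :=
      mul_le_mul_of_nonneg_left (hc x) (le_max_right _ _)
    _ = max C 0 * c * n' x := by ring


end Paper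
end
end

section
/- Let Ω be a q-closed sesquilinear form on D with respect to ‖·‖_Ω, E = D[‖·‖_Ω], and Υ a bounded sesquilinear form on H whose negative has numerical range disjoint from that of Ω (i.e., {Ω(ξ,ξ) : ‖ξ‖=1} ∩ {-Υ(ξ,ξ) : ‖ξ‖=1} = ∅). Then Υ ∈ P₀(Ω) if and only if there exists a constant c > 0 such that c‖ξ‖_Ω ≤ sup{|(Ω+Υ)(ξ,η)| : η ∈ D, ‖η‖_Ω = 1} for all ξ ∈ D. -/
noncomputable section

open Filter Topology Function
open scoped InnerProductSpace

/-!
Transported to the reflexive Banach space `E = D[n]`, the form `Θ = Ω + Υ` is bounded, so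
`u ↦ conj ∘ Θ u` is a bounded conjugate-linear operator `A : E → E*`; the supremum in the
statement is `‖A u‖`, and `Υ ∈ P₀(Ω)` says exactly that `A` is bijective. A bijective `A` is
bounded below by the open mapping theorem. Conversely, a bounded-below `A` is injective with
closed range, and the range is dense: by reflexivity a functional on `E*` vanishing on it is
evaluation at some `η`, so `Θ(η, η) = 0`, and the disjointness of the numerical ranges forces
`η = 0`.
-/

namespace Paper

open ComplexConjugate

theorem _root_.Submodule.topologicalClosure_eq_top_of_forall_dual {𝕜 F : Type*} [RCLike 𝕜]
    [NormedAddCommGroup F] [NormedSpace 𝕜 F] {p : Submodule 𝕜 F}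
    (h : ∀ g : StrongDual 𝕜 F, (∀ x ∈ p, g x = 0) → g = 0) : p.topologicalClosure = ⊤ := by
  set q := p.topologicalClosure
  -- an instance argument of the normed structure on `F ⧸ q`
  have : IsClosed (q : Set F) := p.isClosed_topologicalClosure
  refine Submodule.eq_top_iff'.2 fun x => by_contra fun hx => ?_
  obtain ⟨f, hf⟩ := SeparatingDual.exists_ne_zero (R := 𝕜)
    (mt (Submodule.Quotient.mk_eq_zero q).1 hx)
  refine hf (DFunLike.congr_fun (h (f.comp q.mkQL) fun y hy => ?_) x)
  simp [(Submodule.Quotient.mk_eq_zero q).2 (p.le_topologicalClosure hy)]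

theorem exists_pos_mul_norm_le_norm_apply_of_bijective {𝕜 𝕜' : Type*}
    [NontriviallyNormedField 𝕜] [NontriviallyNormedField 𝕜'] {σ : 𝕜 →+* 𝕜'} {σ' : 𝕜' →+* 𝕜}
    [RingHomInvPair σ σ'] [RingHomIsometric σ] [RingHomIsometric σ']
    {E F : Type*} [NormedAddCommGroup E] [NormedSpace 𝕜 E] [CompleteSpace E]
    [NormedAddCommGroup F] [NormedSpace 𝕜' F] [CompleteSpace F]
    {A : E →SL[σ] F} (hA : Bijective A) :
    ∃ c, 0 < c ∧ ∀ u, c * ‖u‖ ≤ ‖A u‖ := by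
  obtain ⟨C, hC, hpre⟩ := A.exists_preimage_norm_le (σ' := σ') hA.2
  refine ⟨C⁻¹, inv_pos.2 hC, fun u => ?_⟩
  obtain ⟨x, hx, hxu⟩ := hpre (A u)
  rw [hA.1 hx] at hxu
  rwa [inv_mul_le_iff₀ hC]

section Reflexive

variable {E : Type*} [NormedAddCommGroup E] [NormedSpace ℂ E] [CompleteSpace E]
  {A : E →L⋆[ℂ] StrongDual ℂ E}

theorem bijective_of_mul_norm_le_norm_apply
    (hrefl : Surjective (NormedSpace.inclusionInDoubleDual ℂ E))
    (hdiag : ∀ u, A u u = 0 → u = 0) {c : ℝ} (hc : 0 < c) (hlow : ∀ u, c * ‖u‖ ≤ ‖A u‖) :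
    Bijective A := by
  refine (A.bijective_iff_dense_range_and_antilipschitz).2 ⟨?_, (⟨c, hc.le⟩ : NNReal)⁻¹, ?_⟩
  · refine Submodule.topologicalClosure_eq_top_of_forall_dual fun g hg => ?_
    obtain ⟨v, rfl⟩ := hrefl g
    have hv : v = 0 := hdiag v (hg (A v) ⟨v, rfl⟩)
    simp [hv]
  · refine A.antilipschitz_of_bound fun u => ?_
    change ‖u‖ ≤ c⁻¹ * ‖A u‖
    rw [inv_mul_eq_div, le_div_iff₀' hc]
    exact hlow u

theorem bijective_iff_exists_pos_mul_norm_le_norm_apply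
    (hrefl : Surjective (NormedSpace.inclusionInDoubleDual ℂ E))
    (hdiag : ∀ u, A u u = 0 → u = 0) :
    Bijective A ↔ ∃ c, 0 < c ∧ ∀ u, c * ‖u‖ ≤ ‖A u‖ :=
  ⟨exists_pos_mul_norm_le_norm_apply_of_bijective (σ' := starRingEnd ℂ),
    fun ⟨_, hc, hlow⟩ => bijective_of_mul_norm_le_norm_apply hrefl hdiag hc hlow⟩

end Reflexive

namespace IsSesq

variable {V W : Type} [AddCommGroup V] [Module ℂ V] [AddCommGroup W] [Module ℂ W]
  {Θ Ψ : V → V → ℂ}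

theorem map_add_left (h : IsSesq Θ) (u₁ u₂ v : V) : Θ (u₁ + u₂) v = Θ u₁ v + Θ u₂ v :=
  (h.1 v).map_add u₁ u₂

theorem map_smul_left (h : IsSesq Θ) (c : ℂ) (u v : V) : Θ (c • u) v = c * Θ u v :=
  (h.1 v).map_smul c u

theorem map_add_right (h : IsSesq Θ) (u v₁ v₂ : V) : Θ u (v₁ + v₂) = Θ u v₁ + Θ u v₂ := by
  simpa using congrArg conj ((h.2 u).map_add v₁ v₂)

theorem map_smul_right (h : IsSesq Θ) (c : ℂ) (u v : V) : Θ u (c • v) = conj c * Θ u v := by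
  simpa [mul_comm] using congrArg conj ((h.2 u).map_smul c v)

theorem add_s14 (hΘ : IsSesq Θ) (hΨ : IsSesq Ψ) : IsSesq fun u v => Θ u v + Ψ u v := by
  refine ⟨fun v => ⟨fun u₁ u₂ => ?_, fun c u => ?_⟩, fun u => ⟨fun v₁ v₂ => ?_, fun c v => ?_⟩⟩
  · simp only [hΘ.map_add_left, hΨ.map_add_left]; ring
  · simp only [hΘ.map_smul_left, hΨ.map_smul_left, smul_eq_mul]; ring
  · simp only [hΘ.map_add_right, hΨ.map_add_right, map_add]; ring
  · simp only [hΘ.map_smul_right, hΨ.map_smul_right, map_add, map_mul, Complex.conj_conj,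
      smul_eq_mul]; ring

theorem comp_s14 (h : IsSesq Θ) (f : W →ₗ[ℂ] V) : IsSesq fun u v => Θ (f u) (f v) :=
  ⟨fun v => ⟨fun u₁ u₂ => by simp [h.map_add_left], fun c u => by simp [h.map_smul_left]⟩,
    fun u => ⟨fun v₁ v₂ => by simp [h.map_add_right], fun c v => by
      simp [h.map_smul_right, mul_comm]⟩⟩

variable {E : Type} [NormedAddCommGroup E] [NormedSpace ℂ E] {Φ : E → E → ℂ}

def toDualCLM (h : IsSesq Φ) (B : ℝ) (hB : ∀ u v, ‖Φ u v‖ ≤ B * ‖u‖ * ‖v‖) :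
    E →L⋆[ℂ] StrongDual ℂ E :=
  LinearMap.mkContinuous₂
    (LinearMap.mk₂'ₛₗ (starRingEnd ℂ) (RingHom.id ℂ) (fun u v => conj (Φ u v))
      (fun u₁ u₂ v => by simp [h.map_add_left])
      (fun c u v => by simp [h.map_smul_left])
      (fun u => (h.2 u).map_add) (fun c u => (h.2 u).map_smul c))
    B (fun u v => by simpa using hB u v)

@[simp]
theorem toDualCLM_apply (h : IsSesq Φ) (B : ℝ) (hB : ∀ u v, ‖Φ u v‖ ≤ B * ‖u‖ * ‖v‖)
    (u v : E) : h.toDualCLM B hB u v = conj (Φ u v) :=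
  rfl

end IsSesq

attribute [instance] BanachModel.instGroup BanachModel.instSpace BanachModel.instComplete

theorem BanachModel.injective {V : Type} [AddCommGroup V] [Module ℂ V] {n : V → ℝ}
    (M : BanachModel V n) (hn : ∀ x, n x = 0 ↔ x = 0) : Injective M.j :=
  (injective_iff_map_eq_zero M.j).2 fun x hx => (hn x).1 (by rw [← M.isometry, hx, norm_zero])

section Subspace

variable {H : Type} [NormedAddCommGroup H] [InnerProductSpace ℂ H] {D : Submodule ℂ H}
  {n : D → ℝ} {Ω : D → D → ℂ} {Υ : H → H → ℂ}

theorem BoundedOn.add_restrict (hΩ : BoundedOn D Ω n) (hemb : EmbedsContinuously D n)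
    (hΥ : ∃ C, ∀ x y : H, ‖Υ x y‖ ≤ C * ‖x‖ * ‖y‖) :
    BoundedOn D (fun a b => Ω a b + Υ a b) n := by
  obtain ⟨β, hβ, hΩ⟩ := hΩ
  obtain ⟨α, hα, hemb⟩ := hemb
  obtain ⟨C, hΥ⟩ := hΥ
  refine ⟨β + max C 0 * α * α,
    add_pos_of_pos_of_nonneg hβ (by have := le_max_right C 0; positivity), fun ξ η => ?_⟩
  have hξ : 0 ≤ α * n ξ := (norm_nonneg _).trans (hemb ξ)
  calc ‖Ω ξ η + Υ ξ η‖ ≤ ‖Ω ξ η‖ + ‖Υ ξ η‖ := norm_add_le _ _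
    _ ≤ β * n ξ * n η + max C 0 * (α * n ξ) * (α * n η) := by
      gcongr
      · exact hΩ ξ η
      · calc ‖Υ ξ η‖ ≤ C * ‖(ξ : H)‖ * ‖(η : H)‖ := hΥ ξ η
          _ ≤ max C 0 * (α * n ξ) * (α * n η) := by
            gcongr
            · exact le_max_left C 0
            · exact hemb ξ
            · exact hemb η
    _ = (β + max C 0 * α * α) * n ξ * n η := by ring

theorem eq_zero_of_add_apply_self_eq_zero (hΩ : IsSesq Ω) (hΥ : IsSesq Υ)
    (hdisj : NumRangeForm D Ω ∩ NumRangeFormH (fun x y => -Υ x y) = ∅) {ξ : D}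
    (hξ : Ω ξ ξ + Υ ξ ξ = 0) : ξ = 0 := by
  by_contra hne
  set r : ℂ := (‖(ξ : H)‖ : ℂ)⁻¹
  have hunit : ‖((r • ξ : D) : H)‖ = 1 := by
    rw [Submodule.coe_smul]
    exact norm_smul_inv_norm (by simpa using hne)
  have hrange : Ω (r • ξ) (r • ξ) = -Υ ↑(r • ξ) ↑(r • ξ) := by
    simp only [Submodule.coe_smul, hΩ.map_smul_left, hΩ.map_smul_right, hΥ.map_smul_left,
      hΥ.map_smul_right]
    linear_combination (r * conj r) * hξ
  exact (Set.eq_empty_iff_forall_notMem.1 hdisj) _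
    ⟨⟨r • ξ, hunit, rfl⟩, ⟨_, hunit, hrange⟩⟩

end Subspace

section Model

variable {H : Type} [NormedAddCommGroup H] [InnerProductSpace ℂ H] {D : Submodule ℂ H}
  {n : D → ℝ} {E : Type} [NormedAddCommGroup E] [NormedSpace ℂ E]

theorem memConjDual_iff (e : D ≃ₗ[ℂ] E) (he : ∀ ξ, ‖e ξ‖ = n ξ) {Λ : D → ℂ} :
    MemConjDual D n Λ ↔ ∃ f : StrongDual ℂ E, ∀ η, Λ η = conj (f (e η)) := by
  constructor
  · rintro ⟨hadd, hsmul, C, hC⟩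
    let f : E →ₗ[ℂ] ℂ :=
      { toFun := fun v => conj (Λ (e.symm v))
        map_add' := fun v w => by simp [hadd]
        map_smul' := fun c v => by simp [hsmul] }
    refine ⟨f.mkContinuous C fun v => ?_, fun η => by simp [f]⟩
    simpa [f, ← he] using hC (e.symm v)
  · rintro ⟨f, hf⟩
    obtain rfl : Λ = fun η => conj (f (e η)) := funext hf
    refine ⟨fun x y => by simp, fun c x => by simp, ‖f‖, fun x => ?_⟩
    simpa [he] using f.le_opNorm (e x)

theorem inP0_iff_bijective {Ω : D → D → ℂ} {Υ : H → H → ℂ} (e : D ≃ₗ[ℂ] E)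
    (he : ∀ ξ, ‖e ξ‖ = n ξ) {A : E →L⋆[ℂ] StrongDual ℂ E}
    (hA : ∀ ξ η, A (e ξ) (e η) = conj (Ω ξ η + Υ ξ η)) :
    InP0 D Ω n Υ ↔ Bijective A := by
  have hAe : ∀ ξ f, A (e ξ) = f ↔ ∀ η, Ω ξ η + Υ ξ η = conj (f (e η)) := by
    intro ξ f
    rw [ContinuousLinearMap.ext_iff, e.surjective.forall]
    exact forall_congr' fun η => by
      rw [hA, starRingEnd_apply, starRingEnd_apply, eq_star_iff_eq_star, eq_comm]
  simp only [InP0, memConjDual_iff e he]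
  refine and_congr ?_ ⟨fun h f => ?_, fun h Λ ⟨f, hf⟩ => ?_⟩
  · rw [injective_iff_map_eq_zero, e.surjective.forall]
    simp [hAe]
  · obtain ⟨ξ, hξ⟩ := h (fun η => conj (f (e η))) ⟨f, fun _ => rfl⟩
    exact ⟨e ξ, (hAe ξ f).2 fun η => (hξ η).symm⟩
  · obtain ⟨u, hu⟩ := h f
    obtain ⟨ξ, rfl⟩ := e.surjective u
    exact ⟨ξ, fun η => (hf η).trans ((hAe ξ f).1 hu η).symm⟩

theorem formSup_eq_norm {Θ : D → D → ℂ} (e : D ≃ₗ[ℂ] E) (he : ∀ ξ, ‖e ξ‖ = n ξ)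
    {A : E →L⋆[ℂ] StrongDual ℂ E} (hA : ∀ ξ η, A (e ξ) (e η) = conj (Θ ξ η)) (ξ : D) :
    FormSup D Θ n ξ = ‖A (e ξ)‖ := by
  rw [FormSup, ← (A (e ξ)).sSup_sphere_eq_norm]
  congr 1
  ext r
  simp [e.surjective.exists, he, hA, eq_comm]

end Model

theorem inP0_iff_lower_bound_of_disjoint_numrange_general {H : Type} [NormedAddCommGroup H]
    [InnerProductSpace ℂ H]
    (D : Submodule ℂ H) (Ω : ↥D → ↥D → ℂ) (hsesq : IsSesq Ω)
    (n : ↥D → ℝ) (hq : IsQClosed D Ω n)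
    (Υ : H → H → ℂ) (hΥ : IsBoundedForm Υ)
    (hdisj : NumRangeForm D Ω ∩ NumRangeFormH (fun x y => -Υ x y) = ∅) :
    InP0 D Ω n Υ ↔
      ∃ c : ℝ, 0 < c ∧ ∀ ξ : ↥D,
        c * n ξ ≤ FormSup D (fun a b => Ω a b + Υ ↑a ↑b) n ξ := by
  obtain ⟨hn, ⟨hemb, -⟩, ⟨M, hMsurj⟩, hΩb⟩ := hq
  let e : D ≃ₗ[ℂ] M.E := .ofBijective M.j ⟨M.injective hn.1, hMsurj⟩
  have he : ∀ ξ, ‖e ξ‖ = n ξ := M.isometry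
  obtain ⟨β, -, hβ⟩ := hΩb.add_restrict hemb hΥ.2
  let A := ((hsesq.add_s14 (hΥ.1.comp_s14 D.subtype)).comp_s14 e.symm.toLinearMap).toDualCLM β
    fun u v => by simpa [← he] using hβ (e.symm u) (e.symm v)
  have hA : ∀ ξ η, A (e ξ) (e η) = conj (Ω ξ η + Υ ξ η) := by simp [A]
  have hdiag : ∀ u, A u u = 0 → u = 0 := fun u hu =>
    e.symm.map_eq_zero_iff.1 <|
      eq_zero_of_add_apply_self_eq_zero hsesq hΥ.1 hdisj (by simpa [A] using congrArg conj hu)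
  rw [inP0_iff_bijective e he hA,
    bijective_iff_exists_pos_mul_norm_le_norm_apply M.reflexive hdiag]
  simp only [e.surjective.forall, he, formSup_eq_norm e he hA]

theorem inP0_iff_lower_bound_of_disjoint_numrange {H : Type} [NormedAddCommGroup H]
    [InnerProductSpace ℂ H] [CompleteSpace H]
    (D : Submodule ℂ H) (hD : Dense (D : Set H)) (Ω : ↥D → ↥D → ℂ) (hsesq : IsSesq Ω)
    (n : ↥D → ℝ) (hq : IsQClosed D Ω n)
    (Υ : H → H → ℂ) (hΥ : IsBoundedForm Υ)
    (hdisj : NumRangeForm D Ω ∩ NumRangeFormH (fun x y => -Υ x y) = ∅) :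
    InP0 D Ω n Υ ↔
      ∃ c : ℝ, 0 < c ∧ ∀ ξ : ↥D,
        c * n ξ ≤ FormSup D (fun a b => Ω a b + Υ ↑a ↑b) n ξ :=
  inP0_iff_lower_bound_of_disjoint_numrange_general D Ω hsesq n hq Υ hΥ hdisj

end Paper
end
end

section
/- Let α = (αₙ) be any sequence of complex numbers and let Ω_α be the sesquilinear form on D(Ω_α) = {(ξₙ) ∈ ℓ² : Σ|αₙ||ξₙ|² < ∞} defined by Ω_α((ξₙ),(ηₙ)) = Σ αₙ ξₙ conj(ηₙ). Then the operator associated to Ω_α is the multiplication operator M_α with domain D(M_α) = {(ξₙ) ∈ ℓ² : Σ|αₙ|²|ξₙ|² < ∞}, M_α(ξₙ) = (αₙξₙ). -/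
noncomputable section

open Filter Topology Function
open scoped InnerProductSpace

/-!
Testing the representation identity against the unit vectors `e_k` (which lie in the form
domain) forces `(Tξ)_k = α_k ξ_k`, so `T ⊆ M_α`. Conversely, for `ξ ∈ D(M_α)` pick `ζ ∈ D(T)` with
`(T - λ)ζ = (α - λ)ξ`; coordinatewise `(α_k - λ)ζ_k = (α_k - λ)ξ_k` and `α_k ≠ λ`, so `ξ = ζ ∈ D(T)`.
-/

namespace Paper

instance : Fact ((1 : ENNReal) ≤ 2) := ⟨one_le_two⟩

variable {ι : Type*}

lemma memℓp_two_iff_summable_sq {E : ι → Type*} [∀ i, NormedAddCommGroup (E i)]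
    {f : ∀ i, E i} : Memℓp f 2 ↔ Summable fun i => ‖f i‖ ^ 2 := by
  rw [memℓp_gen_iff (by norm_num)]
  norm_num

lemma apply_eq_mul_of_forall_tsum_eq_inner [DecidableEq ι] (α ξ : ι → ℂ)
    (y : lp (fun _ : ι => ℂ) 2)
    (h : ∀ η : lp (fun _ : ι => ℂ) 2, (Summable fun k => ‖α k‖ * ‖η k‖ ^ 2) →
      (∑' k, α k * ξ k * (starRingEnd ℂ) (η k)) = ⟪η, y⟫_ℂ)
    (k : ι) : y k = α k * ξ k := by
  set e : lp (fun _ : ι => ℂ) 2 := lp.single 2 k 1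
  have he : ∀ j ≠ k, e j = 0 := fun j hj => lp.single_apply_ne 2 k _ hj
  have he_summable : Summable fun j => ‖α j‖ * ‖e j‖ ^ 2 :=
    summable_of_ne_finset_zero (s := {k}) fun j hj => by
      simp [he j (Finset.notMem_singleton.1 hj)]
  have hsum : (∑' j, α j * ξ j * (starRingEnd ℂ) (e j)) = α k * ξ k := by
    rw [tsum_eq_single k fun j hj => by simp [he j hj]]
    simp [e]
  have key := h e he_summable
  rw [hsum, lp.inner_single_left] at key
  simpa using key.symm

theorem associated_operator_of_l2_multiplication_form_general (α : ℕ → ℂ) (lam : ℂ)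
    (hlam : lam ∉ closure (Set.range α))
    (DT : Set (lp (fun _ : ℕ => ℂ) 2)) (T : lp (fun _ : ℕ => ℂ) 2 → lp (fun _ : ℕ => ℂ) 2)
    (hrep : ∀ ξ ∈ DT, ∀ η : lp (fun _ : ℕ => ℂ) 2,
      (Summable fun k => ‖α k‖ * ‖η k‖ ^ 2) →
        (∑' k, α k * ξ k * (starRingEnd ℂ) (η k)) = ⟪η, T ξ⟫_ℂ)
    (hsurj : ∀ χ : lp (fun _ : ℕ => ℂ) 2, ∃ ξ ∈ DT, T ξ - lam • ξ = χ) :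
    DT = {ξ : lp (fun _ : ℕ => ℂ) 2 | Summable fun k => ‖α k‖ ^ 2 * ‖ξ k‖ ^ 2} ∧
      ∀ ξ ∈ DT, ∀ k : ℕ, T ξ k = α k * ξ k := by
  have hT : ∀ ξ ∈ DT, ∀ k, T ξ k = α k * ξ k := fun ξ hξ =>
    apply_eq_mul_of_forall_tsum_eq_inner α ξ (T ξ) (hrep ξ hξ)
  have hmem : ∀ ξ : lp (fun _ : ℕ => ℂ) 2, Memℓp (fun k => α k * ξ k) 2 ↔
      Summable fun k => ‖α k‖ ^ 2 * ‖ξ k‖ ^ 2 := by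
    simp only [memℓp_two_iff_summable_sq, norm_mul, mul_pow, implies_true]
  refine ⟨Set.Subset.antisymm (fun ξ hξ => ?_) (fun ξ hξ => ?_), hT⟩
  · rw [Set.mem_ofPred_eq, ← hmem, ← funext (hT ξ hξ)]
    exact lp.memℓp (T ξ)
  · obtain ⟨ζ, hζ, hTζ⟩ :=
      hsurj ⟨_, ((hmem ξ).2 hξ).sub ((lp.memℓp ξ).const_smul lam)⟩
    have hζξ : ζ = ξ := lp.ext <| funext fun k => by
      have hk : (α k - lam) * ζ k = (α k - lam) * ξ k := by
        have := congrFun (congrArg (⇑) hTζ) k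
        simp only [lp.coeFn_sub, lp.coeFn_smul, Pi.sub_apply, Pi.smul_apply, smul_eq_mul,
          hT ζ hζ k] at this
        linear_combination this
      exact mul_left_cancel₀ (sub_ne_zero.2 fun h => hlam (subset_closure ⟨k, h⟩)) hk
    exact hζξ ▸ hζ

theorem associated_operator_of_l2_multiplication_form (α : ℕ → ℂ) (lam : ℂ)
    (hlam : lam ∉ closure (Set.range α))
    (DT : Set (lp (fun _ : ℕ => ℂ) 2)) (T : lp (fun _ : ℕ => ℂ) 2 → lp (fun _ : ℕ => ℂ) 2)
    (hdom : ∀ ξ ∈ DT, Summable fun k => ‖α k‖ * ‖ξ k‖ ^ 2)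
    (hrep : ∀ ξ ∈ DT, ∀ η : lp (fun _ : ℕ => ℂ) 2,
      (Summable fun k => ‖α k‖ * ‖η k‖ ^ 2) →
        (∑' k, α k * ξ k * (starRingEnd ℂ) (η k)) = ⟪η, T ξ⟫_ℂ)
    (hsurj : ∀ χ : lp (fun _ : ℕ => ℂ) 2, ∃ ξ ∈ DT, T ξ - lam • ξ = χ) :
    DT = {ξ : lp (fun _ : ℕ => ℂ) 2 | Summable fun k => ‖α k‖ ^ 2 * ‖ξ k‖ ^ 2} ∧
      ∀ ξ ∈ DT, ∀ k : ℕ, T ξ k = α k * ξ k :=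
  associated_operator_of_l2_multiplication_form_general α lam hlam DT T hrep hsurj

end Paper
end
end

section
/- Let T be a closed densely defined operator on a Hilbert space H with domain D, and let Ω_T(ξ,η) = ⟨Tξ,η⟩ for ξ, η ∈ D, which is q-closed with respect to the graph norm ‖ξ‖_T = (‖ξ‖² + ‖Tξ‖²)^{1/2}. Then Ω_T is solvable with respect to ‖·‖_T if and only if D = H and T is bounded. -/
noncomputable section

open Filter Topology Function
open scoped InnerProductSpace

/-!
If `Ω_T` is solvable, then for every `w ∈ H` the functional `η ↦ ⟪T η, w⟫`, bounded for the graph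
norm, is represented as `(Ω_T + Υ)(ξ, ·)` and is therefore bounded for the norm of `H`; by the
uniform boundedness principle `T` is bounded, and a bounded operator with closed graph and dense
domain is everywhere defined. Conversely, if `T ∈ B(H)`, then `Υ(ξ, η) = ⟪η, ξ - T ξ⟫` turns
`Ω_T + Υ` into the inner product of `H`, the graph norm is equivalent to the norm of `H`, and
solvability is the Riesz representation theorem. That `Ω_T` is q-closed holds for every closed `T`:
the graph norm is the norm of the graph, a closed subspace of the Hilbert space `H ⊕ H`.
-/

section Functional

variable {𝕜 : Type*} [RCLike 𝕜]

theorem exists_eq_inner_of_conjLinear {E : Type*} [NormedAddCommGroup E] [InnerProductSpace 𝕜 E]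
    [CompleteSpace E] (Λ : E →L⋆[𝕜] 𝕜) : ∃ u : E, ∀ x, Λ x = ⟪x, u⟫_𝕜 := by
  refine ⟨(InnerProductSpace.toDual 𝕜 E).symm
    ((starL 𝕜 : 𝕜 ≃L⋆[𝕜] 𝕜).toContinuousLinearMap.comp Λ), fun x => ?_⟩
  rw [← inner_conj_symm, InnerProductSpace.toDual_symm_apply]
  simp

theorem InnerProductSpace.surjective_inclusionInDoubleDual {E : Type*} [NormedAddCommGroup E]
    [InnerProductSpace 𝕜 E] [CompleteSpace E] :
    Surjective (NormedSpace.inclusionInDoubleDual 𝕜 E) := by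
  intro Λ
  obtain ⟨u, hu⟩ := exists_eq_inner_of_conjLinear
    (Λ.comp (InnerProductSpace.toDual 𝕜 E : E →L⋆[𝕜] StrongDual 𝕜 E))
  exact ⟨u, ContinuousLinearMap.ext fun f => by
    simpa using (hu ((InnerProductSpace.toDual 𝕜 E).symm f)).symm⟩

theorem LinearMap.exists_bound_of_forall_exists_bound_inner {V F : Type*} [NormedAddCommGroup V]
    [NormedSpace 𝕜 V] [NormedAddCommGroup F] [InnerProductSpace 𝕜 F] [CompleteSpace F]
    (T : V →ₗ[𝕜] F) (h : ∀ w : F, ∃ C, ∀ v, ‖⟪T v, w⟫_𝕜‖ ≤ C * ‖v‖) :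
    ∃ C, ∀ v, ‖T v‖ ≤ C * ‖v‖ := by
  let g : V → F →L[𝕜] 𝕜 := fun v => ((‖v‖⁻¹ : ℝ) : 𝕜) • innerSL 𝕜 (T v)
  have hg : ∀ v, ‖g v‖ = ‖v‖⁻¹ * ‖T v‖ := fun v => by
    simp [g, norm_smul, innerSL_apply_norm]
  obtain ⟨C, hC⟩ := banach_steinhaus (g := g) fun w => by
    obtain ⟨C, hC⟩ := h w
    refine ⟨max C 0, fun v => ?_⟩
    rcases eq_or_ne v 0 with rfl | hv
    · simp [g]
    · have : ‖g v w‖ = ‖v‖⁻¹ * ‖⟪T v, w⟫_𝕜‖ := by simp [g]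
      rw [this, inv_mul_le_iff₀ (norm_pos_iff.2 hv)]
      exact (hC v).trans (by rw [mul_comm]; gcongr; exact le_max_left _ _)
  refine ⟨C, fun v => ?_⟩
  rcases eq_or_ne v 0 with rfl | hv
  · simp
  · rw [mul_comm, ← inv_mul_le_iff₀ (norm_pos_iff.2 hv), ← hg]
    exact hC v

theorem Submodule.eq_top_of_isClosed_graph_of_bounded {E F : Type*} [NormedAddCommGroup E]
    [NormedSpace 𝕜 E] [NormedAddCommGroup F] [NormedSpace 𝕜 F] [CompleteSpace F]
    {D : Submodule 𝕜 E} (hD : Dense (D : Set E)) (T : D →ₗ[𝕜] F)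
    (hclosed : IsClosed {p : E × F | ∃ ξ : D, p.1 = ξ ∧ p.2 = T ξ})
    (hT : ∃ C, ∀ ξ, ‖T ξ‖ ≤ C * ‖ξ‖) : D = ⊤ := by
  have hdense : DenseRange D.subtypeL := hD.denseRange_val
  have hind : IsUniformInducing D.subtypeL := isUniformInducing_val _
  set S := (T.mkContinuousOfExistsBound hT).extend D.subtypeL
  refine Submodule.eq_top_iff'.2 fun x => ?_
  have hx : (x, S x) ∈ closure {p : E × F | ∃ ξ : D, p.1 = ξ ∧ p.2 = T ξ} :=
    map_mem_closure (f := fun y => (y, S y)) (continuous_id.prodMk S.continuous)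
      (hD.closure_eq ▸ Set.mem_univ x)
      fun y hy => ⟨⟨y, hy⟩, rfl, (ContinuousLinearMap.extend_eq _ hdense hind ⟨y, hy⟩).trans rfl⟩
  obtain ⟨ξ, hξ, -⟩ := hclosed.closure_eq ▸ hx
  exact (show x = ξ from hξ) ▸ ξ.2

end Functional

namespace Paper

section NormComp

variable {V E : Type} [AddCommGroup V] [Module ℂ V] [NormedAddCommGroup E]

theorem isNormFn_norm_comp [NormedSpace ℂ E] {j : V →ₗ[ℂ] E} (hj : Injective j) :
    IsNormFn fun x => ‖j x‖ :=
  ⟨fun x => by simp only [norm_eq_zero, map_eq_zero_iff j hj],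
    fun c x => by simp only [map_smul, norm_smul], fun x y => by simpa using norm_add_le _ _⟩

theorem isReflexiveBanachWrt_norm_comp [InnerProductSpace ℂ E] [CompleteSpace E]
    {j : V →ₗ[ℂ] E} (hj : IsClosed (LinearMap.range j : Set E)) :
    IsReflexiveBanachWrt fun x => ‖j x‖ :=
  haveI := hj.completeSpace_coe
  ⟨{ E := LinearMap.range j
     j := j.rangeRestrict
     isometry := fun _ => rfl
     dense := j.surjective_rangeRestrict.denseRange
     reflexive := InnerProductSpace.surjective_inclusionInDoubleDual },
    j.surjective_rangeRestrict⟩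

end NormComp

theorem isBoundedForm_inner_apply {H : Type} [NormedAddCommGroup H] [InnerProductSpace ℂ H]
    (A : H →L[ℂ] H) : IsBoundedForm fun x y => ⟪y, A x⟫_ℂ :=
  ⟨⟨fun y => ⟨fun a b => by simp only [map_add, inner_add_right],
      fun c a => by simp only [map_smul, inner_smul_right, smul_eq_mul]⟩,
    fun x => ⟨fun a b => by simp only [inner_add_left, map_add],
      fun c a => by simp only [inner_smul_left, map_mul, starRingEnd_self_apply, smul_eq_mul]⟩⟩,
    ‖A‖, fun x y => calc
      ‖⟪y, A x⟫_ℂ‖ ≤ ‖y‖ * (‖A‖ * ‖x‖) :=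
        (norm_inner_le_norm _ _).trans (by gcongr; exact A.le_opNorm x)
      _ = ‖A‖ * ‖x‖ * ‖y‖ := by ring⟩

theorem exists_eq_inner_of_memConjDual {H : Type} [NormedAddCommGroup H]
    [InnerProductSpace ℂ H] [CompleteSpace H] {D : Submodule ℂ H} (htop : D = ⊤) {n : D → ℝ}
    {K : ℝ} (hn₀ : ∀ ξ, 0 ≤ n ξ) (hn : ∀ ξ, n ξ ≤ K * ‖(ξ : H)‖) {Λ : D → ℂ}
    (hΛ : MemConjDual D n Λ) : ∃ ξ : D, ∀ η : D, Λ η = ⟪(η : H), (ξ : H)⟫_ℂ := by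
  set e := LinearEquiv.ofTop D htop
  obtain ⟨hadd, hsmul, C, hC⟩ := hΛ
  let Λ' : H →ₗ⋆[ℂ] ℂ :=
    { toFun := fun x => Λ (e.symm x)
      map_add' := fun x y => by simp only [map_add, hadd]
      map_smul' := fun c x => by simp only [map_smul, hsmul]; rfl }
  have hbound : ∀ x, ‖Λ' x‖ ≤ max C 0 * K * ‖x‖ := fun x => calc
    ‖Λ (e.symm x)‖ ≤ max C 0 * n (e.symm x) :=
      (hC _).trans (mul_le_mul_of_nonneg_right (le_max_left _ _) (hn₀ _))
    _ ≤ max C 0 * (K * ‖x‖) := mul_le_mul_of_nonneg_left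
      ((hn _).trans_eq (by rw [LinearEquiv.coe_ofTop_symm_apply])) (le_max_right _ _)
    _ = max C 0 * K * ‖x‖ := by ring
  obtain ⟨u, hu⟩ := exists_eq_inner_of_conjLinear (Λ'.mkContinuousOfExistsBound ⟨_, hbound⟩)
  have hu' : ∀ x, Λ (e.symm x) = ⟪x, u⟫_ℂ := hu
  refine ⟨e.symm u, fun η => ?_⟩
  rw [LinearEquiv.coe_ofTop_symm_apply, ← hu']
  exact congrArg Λ (e.symm_apply_apply η).symm

section Graph

variable {H : Type} [NormedAddCommGroup H] [InnerProductSpace ℂ H] (D : Submodule ℂ H)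
  (T : D →ₗ[ℂ] H)

/-- `Ω_T(ξ, η) = ⟨Tξ, η⟩`; Mathlib's inner product is conjugate-linear in its first argument. -/
def operatorForm : D → D → ℂ := fun ξ η => ⟪(η : H), T ξ⟫_ℂ

def graphNorm : D → ℝ := fun ξ => √(‖(ξ : H)‖ ^ 2 + ‖T ξ‖ ^ 2)

def graphMap : D →ₗ[ℂ] WithLp 2 (H × H) :=
  (WithLp.linearEquiv 2 ℂ (H × H)).symm.toLinearMap ∘ₗ D.subtype.prod T

theorem norm_graphMap (ξ : D) : ‖graphMap D T ξ‖ = graphNorm D T ξ := by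
  rw [graphNorm, ← Real.sqrt_sq (norm_nonneg (graphMap D T ξ)), WithLp.prod_norm_sq_eq_of_L2]
  rfl

theorem graphNorm_eq_norm_graphMap : graphNorm D T = fun ξ => ‖graphMap D T ξ‖ :=
  funext fun ξ => (norm_graphMap D T ξ).symm

theorem injective_graphMap : Injective (graphMap D T) :=
  fun _ _ h => Subtype.ext (congrArg WithLp.fst h)

theorem norm_coe_le_graphNorm (ξ : D) : ‖(ξ : H)‖ ≤ graphNorm D T ξ :=
  Real.le_sqrt_of_sq_le (le_add_of_nonneg_right (sq_nonneg _))

theorem norm_apply_le_graphNorm (ξ : D) : ‖T ξ‖ ≤ graphNorm D T ξ :=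
  Real.le_sqrt_of_sq_le (le_add_of_nonneg_left (sq_nonneg _))

theorem graphNorm_le_add (ξ : D) : graphNorm D T ξ ≤ ‖(ξ : H)‖ + ‖T ξ‖ :=
  Real.sqrt_le_iff.2 ⟨by positivity, by nlinarith [norm_nonneg (ξ : H), norm_nonneg (T ξ)]⟩

theorem boundedOn_operatorForm : BoundedOn D (operatorForm D T) (graphNorm D T) :=
  ⟨1, one_pos, fun ξ η => calc
    ‖⟪(η : H), T ξ⟫_ℂ‖ ≤ ‖(η : H)‖ * ‖T ξ‖ := norm_inner_le_norm _ _
    _ ≤ graphNorm D T η * graphNorm D T ξ :=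
      mul_le_mul (norm_coe_le_graphNorm D T η) (norm_apply_le_graphNorm D T ξ) (norm_nonneg _)
        (Real.sqrt_nonneg _)
    _ = 1 * graphNorm D T ξ * graphNorm D T η := by ring⟩

theorem memConjDual_inner_apply (w : H) :
    MemConjDual D (graphNorm D T) fun η => ⟪T η, w⟫_ℂ :=
  ⟨fun x y => by simp only [map_add, inner_add_left],
    fun c x => by simp only [map_smul, inner_smul_left],
    ‖w‖, fun x => calc
      ‖⟪T x, w⟫_ℂ‖ ≤ ‖T x‖ * ‖w‖ := norm_inner_le_norm _ _
      _ ≤ graphNorm D T x * ‖w‖ := by gcongr; exact norm_apply_le_graphNorm D T x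
      _ = ‖w‖ * graphNorm D T x := mul_comm _ _⟩

variable {D T}

theorem isClosed_range_graphMap
    (hclosed : IsClosed {p : H × H | ∃ ξ : D, p.1 = ξ ∧ p.2 = T ξ}) :
    IsClosed (LinearMap.range (graphMap D T) : Set (WithLp 2 (H × H))) := by
  convert hclosed.preimage (WithLp.prod_continuous_ofLp 2 H H) using 1
  ext p
  constructor
  · rintro ⟨ξ, rfl⟩
    exact ⟨ξ, rfl, rfl⟩
  · rintro ⟨ξ, h₁, h₂⟩
    exact ⟨ξ, WithLp.ofLp_injective 2 (Prod.ext h₁ h₂).symm⟩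

variable [CompleteSpace H]

theorem compatibleWithInner_graphNorm
    (hclosed : IsClosed {p : H × H | ∃ ξ : D, p.1 = ξ ∧ p.2 = T ξ}) :
    CompatibleWithInner D (graphNorm D T) := by
  refine ⟨⟨1, one_pos, fun ξ => (one_mul (graphNorm D T ξ)).symm ▸ norm_coe_le_graphNorm D T ξ⟩,
    fun ξs hlim hcauchy => ?_⟩
  have hseq : CauchySeq (graphMap D T ∘ ξs) :=
    Metric.cauchySeq_iff.2 fun ε hε => (hcauchy ε hε).imp fun N hN m hm n hn => by
      rw [comp_apply, comp_apply, dist_eq_norm, ← map_sub, norm_graphMap]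
      exact hN m n hm hn
  obtain ⟨g, hg⟩ := cauchySeq_tendsto_of_complete hseq
  obtain ⟨ξ, rfl⟩ : g ∈ LinearMap.range (graphMap D T) :=
    (isClosed_range_graphMap hclosed).mem_of_tendsto hg
      (Eventually.of_forall fun k => ⟨ξs k, rfl⟩)
  have hξ : ξ = 0 := by
    have h₁ : Tendsto (fun k => (ξs k : H)) atTop (𝓝 (ξ : H)) :=
      ((WithLp.continuous_fst 2 H H).tendsto _).comp hg
    have h₂ : Tendsto (fun k => (ξs k : H)) atTop (𝓝 0) :=
      tendsto_zero_iff_norm_tendsto_zero.2 hlim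
    exact Subtype.ext (tendsto_nhds_unique h₁ h₂)
  subst hξ
  simpa [graphNorm_eq_norm_graphMap] using hg.norm

theorem isQClosed_operatorForm
    (hclosed : IsClosed {p : H × H | ∃ ξ : D, p.1 = ξ ∧ p.2 = T ξ}) :
    IsQClosed D (operatorForm D T) (graphNorm D T) := by
  refine ⟨?_, compatibleWithInner_graphNorm hclosed, ?_, boundedOn_operatorForm D T⟩
  · rw [graphNorm_eq_norm_graphMap]
    exact isNormFn_norm_comp (injective_graphMap D T)
  · rw [graphNorm_eq_norm_graphMap]
    exact isReflexiveBanachWrt_norm_comp (isClosed_range_graphMap hclosed)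

theorem exists_bound_of_isSolvable (h : IsSolvable D (operatorForm D T) (graphNorm D T)) :
    ∃ C, ∀ ξ : D, ‖T ξ‖ ≤ C * ‖(ξ : H)‖ := by
  obtain ⟨-, Υ, ⟨-, C₀, hΥ⟩, -, hrep⟩ := h
  refine T.exists_bound_of_forall_exists_bound_inner fun w => ?_
  obtain ⟨ξ, hξ⟩ := hrep _ (memConjDual_inner_apply D T w)
  refine ⟨‖T ξ‖ + C₀ * ‖(ξ : H)‖, fun η => ?_⟩
  rw [hξ η]
  calc ‖⟪(η : H), T ξ⟫_ℂ + Υ ξ η‖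
      ≤ ‖(η : H)‖ * ‖T ξ‖ + C₀ * ‖(ξ : H)‖ * ‖(η : H)‖ :=
        (norm_add_le _ _).trans (add_le_add (norm_inner_le_norm _ _) (hΥ _ _))
    _ = (‖T ξ‖ + C₀ * ‖(ξ : H)‖) * ‖η‖ := by rw [Submodule.coe_norm]; ring

theorem isSolvable_operatorForm_of_eq_top
    (hclosed : IsClosed {p : H × H | ∃ ξ : D, p.1 = ξ ∧ p.2 = T ξ}) (htop : D = ⊤)
    {C : ℝ} (hT : ∀ ξ : D, ‖T ξ‖ ≤ C * ‖(ξ : H)‖) :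
    IsSolvable D (operatorForm D T) (graphNorm D T) := by
  set e := LinearEquiv.ofTop D htop
  let S : H →L[ℂ] H := (T ∘ₗ e.symm.toLinearMap).mkContinuousOfExistsBound
    ⟨C, fun x => (hT (e.symm x)).trans_eq (by rw [LinearEquiv.coe_ofTop_symm_apply])⟩
  have hS : ∀ ξ : D, S ξ = T ξ := fun ξ => by
    simp [S, e, LinearEquiv.ofTop_symm_apply]
  have hsum : ∀ ξ η : D,
      operatorForm D T ξ η + ⟪(η : H), (ContinuousLinearMap.id ℂ H - S) ξ⟫_ℂ =
        ⟪(η : H), (ξ : H)⟫_ℂ := fun ξ η => by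
    rw [sub_apply, ContinuousLinearMap.id_apply, hS, inner_sub_right, operatorForm]
    ring
  refine ⟨isQClosed_operatorForm hclosed, _, isBoundedForm_inner_apply (.id ℂ H - S),
    fun ξ hξ => ?_, fun Λ hΛ => ?_⟩
  · have := hξ ξ
    rw [hsum] at this
    exact Subtype.ext (inner_self_eq_zero.1 this)
  · obtain ⟨ξ, hξ⟩ := exists_eq_inner_of_memConjDual htop (K := 1 + C) (fun _ => Real.sqrt_nonneg _)
      (fun ξ => (graphNorm_le_add D T ξ).trans (by linarith [hT ξ])) hΛ
    exact ⟨ξ, fun η => (hξ η).trans (hsum ξ η).symm⟩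

end Graph

theorem graph_form_solvable_iff_bounded {H : Type} [NormedAddCommGroup H]
    [InnerProductSpace ℂ H] [CompleteSpace H]
    (D : Submodule ℂ H) (hD : Dense (D : Set H)) (T : ↥D →ₗ[ℂ] H)
    (hclosed : IsClosed {p : H × H | ∃ ξ : ↥D, p.1 = (ξ : H) ∧ p.2 = T ξ}) :
    IsSolvable D (fun ξ η => ⟪(η : H), T ξ⟫_ℂ)
        (fun ξ => Real.sqrt (‖(ξ : H)‖ ^ 2 + ‖T ξ‖ ^ 2)) ↔
      (D = (⊤ : Submodule ℂ H) ∧ ∃ C : ℝ, ∀ ξ : ↥D, ‖T ξ‖ ≤ C * ‖(ξ : H)‖) := by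
  refine ⟨fun h => ?_, fun ⟨hD, C, hT⟩ => isSolvable_operatorForm_of_eq_top hclosed hD hT⟩
  obtain ⟨C, hC⟩ := exists_bound_of_isSolvable h
  exact ⟨Submodule.eq_top_of_isClosed_graph_of_bounded hD T hclosed ⟨C, hC⟩, C, hC⟩

end Paper
end
end
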